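/- arXiv:2208.13652 — 9 statements merged into one kernel-verified Lean document; each statement's English description precedes it below -/
import Mathlib

section
/- Let n ≥ 2 and let S and T be nonempty subsets of {1, …, n−1}. Define U_{S,T} = {s' − s : s, s' ∈ S, s' − s > 0} ∪ {t' − t : t, t' ∈ T, t' − t > 0} ∪ {s + t : s ∈ S, t ∈ T}. Then the greatest common divisor of the elements of U_{S,T} equals the greatest common divisor of the elements of {s + t : s ∈ S, t ∈ T}. -/
/-! A positive difference `s' - s` equals `(s' + t) - (s + t)` for any `t ∈ T`, so every common
divisor of the sums divides all of `U_{S,T}`, while `U_{S,T}` contains the sums. -/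

theorem dvd_of_mem_image_sub_of_dvd_add {S : Finset ℕ} {g c x : ℕ}
    (hS : ∀ s ∈ S, g ∣ s + c)
    (hx : x ∈ ((S ×ˢ S).filter (fun p => p.1 < p.2)).image (fun p => p.2 - p.1)) : g ∣ x := by
  obtain ⟨⟨a, b⟩, hab, rfl⟩ := Finset.mem_image.1 hx
  simp only [Finset.mem_filter, Finset.mem_product] at hab
  simpa only [Nat.add_sub_add_right] using Nat.dvd_sub (hS b hab.1.2) (hS a hab.1.1)

theorem gcd_U_eq_gcd_sum_general (S T : Finset ℕ)
    (hS : S.Nonempty) (hT : T.Nonempty) :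
    (((S ×ˢ S).filter (fun p => p.1 < p.2)).image (fun p => p.2 - p.1) ∪
      ((T ×ˢ T).filter (fun p => p.1 < p.2)).image (fun p => p.2 - p.1) ∪
      (S ×ˢ T).image (fun p => p.1 + p.2)).gcd id
    = (S ×ˢ T).gcd (fun p => p.1 + p.2) := by
  set g := (S ×ˢ T).gcd fun p => p.1 + p.2
  have hg : ∀ s ∈ S, ∀ t ∈ T, g ∣ s + t := fun s hs t ht =>
    Finset.gcd_dvd (b := (s, t)) (Finset.mem_product.2 ⟨hs, ht⟩)
  obtain ⟨s₀, hs₀⟩ := hS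
  obtain ⟨t₀, ht₀⟩ := hT
  refine Nat.dvd_antisymm ?_ (Finset.dvd_gcd fun x hx => ?_)
  · calc _ ∣ ((S ×ˢ T).image fun p => p.1 + p.2).gcd id :=
          Finset.gcd_mono Finset.subset_union_right
      _ = g := by rw [Finset.gcd_image]; rfl
  rcases Finset.mem_union.1 hx with hx | hx
  · rcases Finset.mem_union.1 hx with hx | hx
    · exact dvd_of_mem_image_sub_of_dvd_add (fun s hs => hg s hs t₀ ht₀) hx
    · exact dvd_of_mem_image_sub_of_dvd_add (fun t ht => add_comm s₀ t ▸ hg s₀ hs₀ t ht) hx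
  · obtain ⟨⟨s, t⟩, hst, rfl⟩ := Finset.mem_image.1 hx
    exact hg s (Finset.mem_product.1 hst).1 t (Finset.mem_product.1 hst).2

/-- For nonempty subsets `S, T ⊆ {1, …, n−1}`, the gcd of
`U_{S,T} = {s'−s > 0} ∪ {t'−t > 0} ∪ {s+t}` equals the gcd of `{s+t : s ∈ S, t ∈ T}`. -/
theorem gcd_U_eq_gcd_sum (n : ℕ) (hn : 2 ≤ n) (S T : Finset ℕ)
    (hS : S.Nonempty) (hT : T.Nonempty)
    (hSsub : S ⊆ Finset.Icc 1 (n - 1)) (hTsub : T ⊆ Finset.Icc 1 (n - 1)) :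
    (((S ×ˢ S).filter (fun p => p.1 < p.2)).image (fun p => p.2 - p.1) ∪
      ((T ×ˢ T).filter (fun p => p.1 < p.2)).image (fun p => p.2 - p.1) ∪
      (S ×ˢ T).image (fun p => p.1 + p.2)).gcd id
    = (S ×ˢ T).gcd (fun p => p.1 + p.2) :=
  gcd_U_eq_gcd_sum_general S T hS hT
end

section
/- Let D be the Toeplitz digraph of T_n⟨S;T⟩ and let d = gcd{s + t : s ∈ S, t ∈ T}. If two vertices u and v are adjacent in the m-step competition graph C^m(D) for some positive integer m, then d divides u − v. -/
/-- The Toeplitz digraph of `T_n⟨S;T⟩`: vertices are integers in `[1, n]`, and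
there is an arc `(u, v)` iff `v − u ∈ S` or `u − v ∈ T`. -/
def ToepArc (n : ℕ) (S T : Finset ℕ) (u v : ℤ) : Prop :=
  u ∈ Finset.Icc (1 : ℤ) (n : ℤ) ∧ v ∈ Finset.Icc (1 : ℤ) (n : ℤ) ∧
    ((∃ s ∈ S, v = u + (s : ℤ)) ∨ (∃ t ∈ T, v = u - (t : ℤ)))

/-- There is a directed `(u,v)`-walk of length `m` in the Toeplitz digraph. -/
def HasWalk (n : ℕ) (S T : Finset ℕ) (m : ℕ) (u v : ℤ) : Prop :=
  ∃ w : ℕ → ℤ, w 0 = u ∧ w m = v ∧ ∀ i < m, ToepArc n S T (w i) (w (i + 1))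

/-- `u` and `v` are adjacent in the `m`-step competition graph `C^m(D)`. -/
def CompAdj (n : ℕ) (S T : Finset ℕ) (m : ℕ) (u v : ℤ) : Prop :=
  u ≠ v ∧ ∃ x : ℤ, HasWalk n S T m u x ∧ HasWalk n S T m v x

/-!
Every arc of the Toeplitz digraph moves a vertex by some `s ∈ S` or by `-t` with `t ∈ T`, and
modulo `d` all these steps are congruent to a fixed `s₀ ∈ S`, since `d ∣ s + t₀` and
`d ∣ s₀ + t`. Hence a walk of length `m` from `u` ends at `u + m s₀` modulo `d`, so two walks of
the same length ending at the same vertex start at vertices congruent modulo `d`.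
-/

theorem Int.modEq_add_mul_of_forall_lt {w : ℕ → ℤ} {c d : ℤ} {k : ℕ}
    (h : ∀ i < k, w (i + 1) ≡ w i + c [ZMOD d]) : w k ≡ w 0 + k * c [ZMOD d] := by
  induction k with
  | zero => simp
  | succ k ih =>
    calc w (k + 1) ≡ w k + c [ZMOD d] := h k k.lt_succ_self
      _ ≡ w 0 + k * c + c [ZMOD d] :=
        (ih fun i hi => h i (hi.trans k.lt_succ_self)).add_right c
      _ = w 0 + (k + 1 : ℕ) * c := by push_cast; ring

section

variable {n : ℕ} {S T : Finset ℕ} {d : ℤ} {s₀ t₀ : ℕ}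

theorem ToepArc.modEq_add (hdvd : ∀ s ∈ S, ∀ t ∈ T, d ∣ (s : ℤ) + t) (hs₀ : s₀ ∈ S)
    (ht₀ : t₀ ∈ T) {a b : ℤ} (h : ToepArc n S T a b) : b ≡ a + s₀ [ZMOD d] := by
  rcases h.2.2 with ⟨s, hs, rfl⟩ | ⟨t, ht, rfl⟩
  · refine Int.ModEq.add_left a (Int.modEq_iff_dvd.2 ?_)
    simpa using dvd_sub (hdvd s₀ hs₀ t₀ ht₀) (hdvd s hs t₀ ht₀)
  · exact Int.modEq_iff_dvd.2 (by simpa [add_comm] using hdvd s₀ hs₀ t ht)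

theorem HasWalk.modEq_add_mul (hdvd : ∀ s ∈ S, ∀ t ∈ T, d ∣ (s : ℤ) + t) (hs₀ : s₀ ∈ S)
    (ht₀ : t₀ ∈ T) {k : ℕ} {a x : ℤ} (h : HasWalk n S T k a x) :
    x ≡ a + k * s₀ [ZMOD d] := by
  obtain ⟨w, rfl, rfl, harc⟩ := h
  exact Int.modEq_add_mul_of_forall_lt fun i hi => (harc i hi).modEq_add hdvd hs₀ ht₀

theorem CompAdj.modEq (hdvd : ∀ s ∈ S, ∀ t ∈ T, d ∣ (s : ℤ) + t) (hs₀ : s₀ ∈ S)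
    (ht₀ : t₀ ∈ T) {m : ℕ} {u v : ℤ} (h : CompAdj n S T m u v) : u ≡ v [ZMOD d] := by
  obtain ⟨-, x, hu, hv⟩ := h
  exact Int.ModEq.add_right_cancel' (m * s₀ : ℤ)
    ((hu.modEq_add_mul hdvd hs₀ ht₀).symm.trans (hv.modEq_add_mul hdvd hs₀ ht₀))

end

theorem compAdj_dvd_sub_general (n : ℕ) (S T : Finset ℕ)
    (hS : S.Nonempty) (hT : T.Nonempty)
    (d : ℕ) (hd : d = (S ×ˢ T).gcd (fun p => p.1 + p.2))
    (m : ℕ) (u v : ℤ)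
    (hadj : CompAdj n S T m u v) :
    (d : ℤ) ∣ u - v := by
  obtain ⟨s₀, hs₀⟩ := hS
  obtain ⟨t₀, ht₀⟩ := hT
  have hdvd : ∀ s ∈ S, ∀ t ∈ T, (d : ℤ) ∣ (s : ℤ) + t := fun s hs t ht => by
    have : d ∣ s + t :=
      hd ▸ Finset.gcd_dvd (f := fun p : ℕ × ℕ => p.1 + p.2) (Finset.mk_mem_product hs ht)
    exact_mod_cast this
  exact (hadj.modEq hdvd hs₀ ht₀).symm.dvd

/-- If `u` and `v` are adjacent in `C^m(D)` for some positive `m`,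
then `d = gcd{s + t : s ∈ S, t ∈ T}` divides `u − v`. -/
theorem compAdj_dvd_sub (n : ℕ) (hn : 2 ≤ n) (S T : Finset ℕ)
    (hS : S.Nonempty) (hT : T.Nonempty)
    (hSsub : S ⊆ Finset.Icc 1 (n - 1)) (hTsub : T ⊆ Finset.Icc 1 (n - 1))
    (d : ℕ) (hd : d = (S ×ˢ T).gcd (fun p => p.1 + p.2))
    (m : ℕ) (hm : 0 < m) (u v : ℤ)
    (hu : u ∈ Finset.Icc (1 : ℤ) (n : ℤ)) (hv : v ∈ Finset.Icc (1 : ℤ) (n : ℤ))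
    (hadj : CompAdj n S T m u v) :
    (d : ℤ) ∣ u - v :=
  compAdj_dvd_sub_general n S T hS hT d hd m u v hadj
end

section
/- Let D be the Toeplitz digraph of T_n⟨S;T⟩ with max S + min T ≤ n and min S + max T ≤ n. Then there exists a positive integer M such that for every integer m ≥ M, the m-step competition graph C^m(D) and the (m+1)-step competition graph C^{m+1}(D) have exactly the same adjacent pairs of vertices. (That is, the competition period of T_n⟨S;T⟩ is 1.) -/
lemma exists_forall_ge_iff_succ_of_imp_succ {V : Type*} [Finite V] (R : ℕ → V → V → Prop)
    (hR : ∀ m u v, R m u v → R (m + 1) u v) :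
    ∃ M, ∀ m, M ≤ m → ∀ u v, (R m u v ↔ R (m + 1) u v) := by
  let edges : ℕ →o Set (V × V) :=
    ⟨fun m => {p | R m p.1 p.2}, monotone_nat_of_le_succ fun m p => hR m p.1 p.2⟩
  obtain ⟨M, hM⟩ := WellFoundedGT.monotone_chain_condition edges
  refine ⟨M, fun m hm u v => ?_⟩
  have h : edges m = edges (m + 1) := (hM m hm).symm.trans (hM (m + 1) (by omega))
  exact Set.ext_iff.mp h (u, v)

namespace ToepArc

variable {n : ℕ} {S T : Finset ℕ}

lemma exists_of_min'_add_max'_le (hS : S.Nonempty) (hT : T.Nonempty)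
    (h : S.min' hS + T.max' hT ≤ n) {x : ℤ} (hx : x ∈ Finset.Icc (1 : ℤ) n) :
    ∃ y, ToepArc n S T x y := by
  have hT' : T.min' hT ≤ T.max' hT := T.min'_le _ (T.max'_mem hT)
  rw [Finset.mem_Icc] at hx
  by_cases hup : x + (S.min' hS : ℤ) ≤ n
  · exact ⟨_, Finset.mem_Icc.mpr hx, Finset.mem_Icc.mpr ⟨by omega, hup⟩,
      Or.inl ⟨_, S.min'_mem hS, rfl⟩⟩
  · exact ⟨_, Finset.mem_Icc.mpr hx, Finset.mem_Icc.mpr ⟨by omega, by omega⟩,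
      Or.inr ⟨_, T.min'_mem hT, rfl⟩⟩

end ToepArc

namespace HasWalk

variable {n : ℕ} {S T : Finset ℕ} {m : ℕ} {u x y : ℤ}

lemma eq_of_zero (h : HasWalk n S T 0 u x) : u = x := by
  obtain ⟨w, h0, h1, -⟩ := h
  exact h0.symm.trans h1

lemma mem_Icc_of_pos (hm : 0 < m) (h : HasWalk n S T m u x) : x ∈ Finset.Icc (1 : ℤ) n := by
  obtain ⟨w, -, rfl, harc⟩ := h
  obtain ⟨k, rfl⟩ := Nat.exists_eq_succ_of_ne_zero hm.ne'
  exact (harc k k.lt_succ_self).2.1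

lemma snoc (h : HasWalk n S T m u x) (ha : ToepArc n S T x y) : HasWalk n S T (m + 1) u y := by
  obtain ⟨w, h0, hm, harc⟩ := h
  refine ⟨Function.update w (m + 1) y, by simp [h0], by simp, fun i hi => ?_⟩
  rcases Nat.lt_succ_iff_lt_or_eq.mp hi with hi | rfl
  · simpa [Function.update_of_ne (show i ≠ m + 1 by omega),
      Function.update_of_ne (show i + 1 ≠ m + 1 by omega)] using harc i hi
  · simpa [hm] using ha

end HasWalk

lemma CompAdj.succ {n : ℕ} {S T : Finset ℕ} {m : ℕ} {u v : ℤ}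
    (hout : ∀ x ∈ Finset.Icc (1 : ℤ) n, ∃ y, ToepArc n S T x y)
    (h : CompAdj n S T m u v) : CompAdj n S T (m + 1) u v := by
  obtain ⟨hne, x, hu, hv⟩ := h
  rcases Nat.eq_zero_or_pos m with rfl | hm
  · exact absurd (hu.eq_of_zero.trans hv.eq_of_zero.symm) hne
  obtain ⟨y, hy⟩ := hout x (hu.mem_Icc_of_pos hm)
  exact ⟨hne, y, hu.snoc hy, hv.snoc hy⟩

theorem competition_period_one_general (n : ℕ) (S T : Finset ℕ)
    (hS : S.Nonempty) (hT : T.Nonempty)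
    (hST2 : S.min' hS + T.max' hT ≤ n) :
    ∃ M : ℕ, 0 < M ∧ ∀ m : ℕ, M ≤ m →
      ∀ u ∈ Finset.Icc (1 : ℤ) (n : ℤ), ∀ v ∈ Finset.Icc (1 : ℤ) (n : ℤ),
        (CompAdj n S T m u v ↔ CompAdj n S T (m + 1) u v) := by
  obtain ⟨M, hM⟩ := exists_forall_ge_iff_succ_of_imp_succ
    (V := Finset.Icc (1 : ℤ) n) (fun m u v => CompAdj n S T m u v)
    fun _ _ _ => CompAdj.succ fun _ => ToepArc.exists_of_min'_add_max'_le hS hT hST2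
  exact ⟨M + 1, M.succ_pos, fun m hm u hu v hv => hM m (by omega) ⟨u, hu⟩ ⟨v, hv⟩⟩

/-- If `max S + min T ≤ n` and `min S + max T ≤ n`, then the
competition period of `T_n⟨S;T⟩` is `1`: for all sufficiently large `m`, the
`m`-step and `(m+1)`-step competition graphs have exactly the same edges. -/
theorem competition_period_one (n : ℕ) (hn : 2 ≤ n) (S T : Finset ℕ)
    (hS : S.Nonempty) (hT : T.Nonempty)
    (hSsub : S ⊆ Finset.Icc 1 (n - 1)) (hTsub : T ⊆ Finset.Icc 1 (n - 1))
    (hST1 : S.max' hS + T.min' hT ≤ n) (hST2 : S.min' hS + T.max' hT ≤ n) :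
    ∃ M : ℕ, 0 < M ∧ ∀ m : ℕ, M ≤ m →
      ∀ u ∈ Finset.Icc (1 : ℤ) (n : ℤ), ∀ v ∈ Finset.Icc (1 : ℤ) (n : ℤ),
        (CompAdj n S T m u v ↔ CompAdj n S T (m + 1) u v) :=
  competition_period_one_general n S T hS hT hST2
end

section
/- Let D be the Toeplitz digraph of T_n⟨S;T⟩ with max S + min T ≤ n and min S + max T ≤ n, and let d = gcd{s + t : s ∈ S, t ∈ T}. Then there exists a positive integer M such that for every integer m ≥ M and all distinct vertices u, v of D, u and v are adjacent in the m-step competition graph C^m(D) if and only if u ≡ v (mod d). (That is, the limit of the sequence C^m(D) is the disjoint union of the cliques {v ∈ {1,…,n} : v ≡ i (mod d)} for 1 ≤ i ≤ d.) -/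
/-!
Every arc moves a vertex by `s₁ = min S` modulo `d`, so a walk of length `m` from `u` to `x`
forces `x - u ≡ m s₁ (mod d)`; two such walks ending at the same vertex give `u ≡ v (mod d)`.

Conversely, for `s ∈ S`, `t ∈ T` with `s + t ≤ n` the greedy walk "up by `s` if possible, else
down by `t`" realises every displacement `a s - b t` in `a + b` steps; the hypotheses make all
pairs `(s, min T)` and `(min S, t)` usable. Chaining such walks joins any `u, x` with
`x - u ≡ m s₁ (mod d)` by a walk of some length, and the closed walks of length
`(s + t) / gcd(s, t)` at a vertex have gcd dividing `d / gcd(d, s₁)`. By the Frobenius coin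
theorem (`Nat.exists_mem_closure_of_ge`) closed walks then pad a walk to every sufficiently large
length allowed by the congruence.
-/

open Filter Finset

theorem exists_mem_Icc_dvd_sub {L : ℕ} (hL : 0 < L) (z : ℤ) :
    ∃ w ∈ Icc (1 : ℤ) L, (L : ℤ) ∣ w - z := by
  have hL' : (0 : ℤ) < L := by exact_mod_cast hL
  refine ⟨(z - 1) % L + 1, mem_Icc.2 ⟨?_, ?_⟩, -((z - 1) / L), ?_⟩
  · linarith [Int.emod_nonneg (z - 1) hL'.ne']
  · linarith [Int.emod_lt_of_pos (z - 1) hL']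
  · rw [Int.emod_def]; ring

/-- Shift a Bézout pair `(x, y)` by a large multiple `K` of `(t, s)`. -/
theorem exists_eq_natCast_mul_sub_natCast_mul {s t : ℕ} (hs : 0 < s) (ht : 0 < t) {δ : ℤ}
    (h : (Nat.gcd s t : ℤ) ∣ δ) : ∃ a b : ℕ, δ = a * s - b * t := by
  obtain ⟨k, rfl⟩ := h
  set x := Nat.gcdA s t * k
  set y := Nat.gcdB s t * k
  set K := |x| + |y|
  have hs' : (1 : ℤ) ≤ s := by exact_mod_cast hs
  have ht' : (1 : ℤ) ≤ t := by exact_mod_cast ht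
  have hK : K ≤ t * K ∧ K ≤ s * K := by
    constructor <;> nlinarith [abs_nonneg x, abs_nonneg y]
  obtain ⟨a, ha⟩ := Int.eq_ofNat_of_zero_le (a := x + t * K) <| by
    linarith [neg_abs_le x, abs_nonneg y]
  obtain ⟨b, hb⟩ := Int.eq_ofNat_of_zero_le (a := s * K - y) <| by
    linarith [le_abs_self y, abs_nonneg x]
  refine ⟨a, b, ?_⟩
  rw [← ha, ← hb, Nat.gcd_eq_gcd_ab]
  ring

theorem Nat.mul_dvd_add_of_dvd_div_gcd_add_div_gcd {g p s t : ℕ} (hs : g ∣ s) (ht : g ∣ t)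
    (hp : p ∣ s / Nat.gcd s t + t / Nat.gcd s t) : g * p ∣ s + t := by
  have h : Nat.gcd s t * (s / Nat.gcd s t + t / Nat.gcd s t) = s + t := by
    rw [Nat.mul_add, Nat.mul_div_cancel' (Nat.gcd_dvd_left s t),
      Nat.mul_div_cancel' (Nat.gcd_dvd_right s t)]
  exact h ▸ Nat.mul_dvd_mul (Nat.dvd_gcd hs ht) hp

theorem Nat.dvd_of_gcd_mul_dvd_of_dvd_mul {c d k p : ℕ} (hd : 0 < d)
    (hp : Nat.gcd d c * p ∣ d) (hk : d ∣ k * c) : p ∣ k := by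
  have hg : 0 < Nat.gcd d c := Nat.gcd_pos_of_pos_left c hd
  refine (Nat.dvd_div_of_mul_dvd hp).trans
    ((Nat.coprime_div_gcd_div_gcd hg).dvd_of_dvd_mul_right ?_)
  refine Nat.dvd_of_mul_dvd_mul_left hg ?_
  rwa [Nat.mul_div_cancel' (Nat.gcd_dvd_left d c), ← Nat.mul_assoc, Nat.mul_comm _ k,
    Nat.mul_assoc, Nat.mul_div_cancel' (Nat.gcd_dvd_right d c)]

section SumGcd

variable {S T : Finset ℕ}

def sumGcd (S T : Finset ℕ) : ℕ := (S ×ˢ T).gcd fun p => p.1 + p.2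

theorem dvd_sumGcd_iff {x : ℕ} : x ∣ sumGcd S T ↔ ∀ s ∈ S, ∀ t ∈ T, x ∣ s + t := by
  simp only [sumGcd, Finset.dvd_gcd_iff, Prod.forall, mem_product, and_imp]
  exact ⟨fun h s hs t ht => h s t hs ht, fun h s t hs ht => h s hs t ht⟩

theorem sumGcd_dvd_add {s t : ℕ} (hs : s ∈ S) (ht : t ∈ T) : sumGcd S T ∣ s + t :=
  dvd_sumGcd_iff.1 dvd_rfl s hs t ht

theorem dvd_sumGcd_of_dvd_add {x s₁ t₁ : ℕ} (hs₁ : s₁ ∈ S) (hS : ∀ s ∈ S, x ∣ s + t₁)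
    (hT : ∀ t ∈ T, x ∣ s₁ + t) : x ∣ sumGcd S T := by
  refine dvd_sumGcd_iff.2 fun s hs t ht => (Nat.dvd_add_right (hS s₁ hs₁)).1 ?_
  rw [show s₁ + t₁ + (s + t) = s + t₁ + (s₁ + t) by ring]
  exact dvd_add (hS s hs) (hT t ht)

theorem sumGcd_dvd_sub_of_mem_left {s s₁ t₁ : ℕ} (hs : s ∈ S) (hs₁ : s₁ ∈ S) (ht₁ : t₁ ∈ T) :
    (sumGcd S T : ℤ) ∣ s - s₁ := by
  rw [show (s : ℤ) - s₁ = (s + t₁ : ℕ) - (s₁ + t₁ : ℕ) by push_cast; ring]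
  exact dvd_sub (Int.natCast_dvd_natCast.2 (sumGcd_dvd_add hs ht₁))
    (Int.natCast_dvd_natCast.2 (sumGcd_dvd_add hs₁ ht₁))

theorem sumGcd_dvd_neg_sub_of_mem_right {t s₁ : ℕ} (ht : t ∈ T) (hs₁ : s₁ ∈ S) :
    (sumGcd S T : ℤ) ∣ -t - s₁ := by
  rw [show -(t : ℤ) - s₁ = -((s₁ + t : ℕ) : ℤ) by push_cast; ring]
  exact (Int.natCast_dvd_natCast.2 (sumGcd_dvd_add hs₁ ht)).neg_right

end SumGcd

section Walks

variable {n : ℕ} {S T : Finset ℕ}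

theorem hasWalk_zero (u : ℤ) : HasWalk n S T 0 u u :=
  ⟨fun _ => u, rfl, rfl, fun _ hi => absurd hi (Nat.not_lt_zero _)⟩

theorem hasWalk_zero_iff {u v : ℤ} : HasWalk n S T 0 u v ↔ u = v :=
  ⟨fun ⟨_, h0, h1, _⟩ => h0 ▸ h1, fun h => h ▸ hasWalk_zero u⟩

theorem hasWalk_succ_iff {m : ℕ} {u v : ℤ} :
    HasWalk n S T (m + 1) u v ↔ ∃ y, ToepArc n S T u y ∧ HasWalk n S T m y v := by
  constructor
  · rintro ⟨w, rfl, rfl, harc⟩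
    exact ⟨w 1, harc 0 m.succ_pos, fun i => w (i + 1), rfl, rfl,
      fun i hi => harc (i + 1) (by omega)⟩
  · rintro ⟨y, hy, w, rfl, rfl, harc⟩
    refine ⟨fun i => if i = 0 then u else w (i - 1), rfl, rfl, fun i hi => ?_⟩
    rcases i with _ | i
    · simpa using hy
    · simpa using harc i (by omega)

theorem HasWalk.add {m k : ℕ} {u y v : ℤ} (h₁ : HasWalk n S T m u y)
    (h₂ : HasWalk n S T k y v) : HasWalk n S T (m + k) u v := by
  induction m generalizing u with
  | zero => rwa [hasWalk_zero_iff.1 h₁, zero_add]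
  | succ m ih =>
    obtain ⟨z, hz, h₁⟩ := hasWalk_succ_iff.1 h₁
    rw [Nat.succ_add]
    exact hasWalk_succ_iff.2 ⟨z, hz, ih h₁⟩

theorem HasWalk.dvd_sub_sub_mul {d c : ℤ} (hS : ∀ s ∈ S, d ∣ s - c) (hT : ∀ t ∈ T, d ∣ -t - c)
    {m : ℕ} {u v : ℤ} (h : HasWalk n S T m u v) : d ∣ v - u - m * c := by
  induction m generalizing u with
  | zero => simp [hasWalk_zero_iff.1 h]
  | succ m ih =>
    obtain ⟨y, ⟨-, -, ⟨s, hs, rfl⟩ | ⟨t, ht, rfl⟩⟩, h⟩ := hasWalk_succ_iff.1 h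
    · rw [show v - u - ↑(m + 1) * c = (s - c) + (v - (u + s) - m * c) by push_cast; ring]
      exact dvd_add (hS s hs) (ih h)
    · rw [show v - u - ↑(m + 1) * c = (-t - c) + (v - (u - t) - m * c) by push_cast; ring]
      exact dvd_add (hT t ht) (ih h)

/-- Go up by `s` whenever possible, otherwise down by `t`: since `s + t ≤ n`, a vertex from
which the step up leaves `[1, n]` can step down. -/
theorem hasWalk_of_eq_add_mul_sub_mul {s t : ℕ} (hs : s ∈ S) (ht : t ∈ T) (hst : s + t ≤ n) :
    ∀ (a b : ℕ) {u v : ℤ}, u ∈ Icc (1 : ℤ) n → v ∈ Icc (1 : ℤ) n →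
      v = u + a * s - b * t → HasWalk n S T (a + b) u v
  | 0, 0, u, v, _, _, h => by simpa [hasWalk_zero_iff] using h.symm
  | 0, b + 1, u, v, hu, hv, h => by
    rw [mem_Icc] at hu hv
    have hbt : 0 ≤ (b : ℤ) * t := by positivity
    have hd : u - t ∈ Icc (1 : ℤ) n := mem_Icc.2 ⟨by push_cast at h; linarith, by linarith⟩
    exact hasWalk_succ_iff.2 ⟨u - t, ⟨mem_Icc.2 hu, hd, .inr ⟨t, ht, rfl⟩⟩,
      hasWalk_of_eq_add_mul_sub_mul hs ht hst 0 b hd (mem_Icc.2 hv) (by push_cast at h ⊢; linarith)⟩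
  | a + 1, b, u, v, hu, hv, h => by
    rw [mem_Icc] at hu hv
    by_cases hup : u + s ≤ n
    · have hu' : u + s ∈ Icc (1 : ℤ) n := mem_Icc.2 ⟨by linarith [s.cast_nonneg (α := ℤ)], hup⟩
      rw [Nat.add_right_comm]
      exact hasWalk_succ_iff.2 ⟨u + s, ⟨mem_Icc.2 hu, hu', .inl ⟨s, hs, rfl⟩⟩,
        hasWalk_of_eq_add_mul_sub_mul hs ht hst a b hu' (mem_Icc.2 hv)
          (by push_cast at h ⊢; linarith)⟩
    · have hst' : (s : ℤ) + t ≤ n := by exact_mod_cast hst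
      match b, h with
      | 0, h =>
        have : 0 ≤ (a : ℤ) * s := by positivity
        push_cast at h
        linarith
      | b + 1, h =>
        have hd : u - t ∈ Icc (1 : ℤ) n :=
          mem_Icc.2 ⟨by linarith, by linarith [t.cast_nonneg (α := ℤ)]⟩
        rw [← Nat.add_assoc]
        exact hasWalk_succ_iff.2 ⟨u - t, ⟨mem_Icc.2 hu, hd, .inr ⟨t, ht, rfl⟩⟩,
          hasWalk_of_eq_add_mul_sub_mul hs ht hst (a + 1) b hd (mem_Icc.2 hv)
            (by push_cast at h ⊢; linarith)⟩
termination_by a b => a + b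

end Walks

section Reachability

variable {n : ℕ} {S T : Finset ℕ}

def ReachableModulo (n : ℕ) (S T : Finset ℕ) (h : ℕ) : Prop :=
  ∀ u ∈ Icc (1 : ℤ) n, ∀ v ∈ Icc (1 : ℤ) n, (h : ℤ) ∣ v - u → ∃ ℓ, HasWalk n S T ℓ u v

theorem reachableModulo_gcd_of_mem {s t : ℕ} (hs : s ∈ S) (ht : t ∈ T) (hs₀ : 0 < s)
    (ht₀ : 0 < t) (hst : s + t ≤ n) : ReachableModulo n S T (Nat.gcd s t) := by
  intro u hu v hv h
  obtain ⟨a, b, hab⟩ := exists_eq_natCast_mul_sub_natCast_mul hs₀ ht₀ h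
  exact ⟨a + b, hasWalk_of_eq_add_mul_sub_mul hs ht hst a b hu hv (by linarith)⟩

theorem ReachableModulo.of_dvd {a b : ℕ} (hab : a ∣ b) (ha : ReachableModulo n S T a) :
    ReachableModulo n S T b :=
  fun u hu v hv h => ha u hu v hv ((Int.natCast_dvd_natCast.2 hab).trans h)

/-- Route through a vertex `w ≡ u (mod a)`, `w ≡ v (mod b)`, found in `[1, lcm a b] ⊆ [1, n]`. -/
theorem ReachableModulo.gcd {a b c : ℕ} (ha : ReachableModulo n S T a)
    (hb : ReachableModulo n S T b) (hac : a ∣ c) (hbc : b ∣ c) (hc : 0 < c) (hcn : c ≤ n) :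
    ReachableModulo n S T (Nat.gcd a b) := by
  intro u hu v hv ⟨k, hk⟩
  have hL : 0 < Nat.lcm a b :=
    Nat.lcm_pos (Nat.pos_of_dvd_of_pos hac hc) (Nat.pos_of_dvd_of_pos hbc hc)
  have hLn : (Nat.lcm a b : ℤ) ≤ n := by
    exact_mod_cast (Nat.le_of_dvd hc (Nat.lcm_dvd hac hbc)).trans hcn
  obtain ⟨w, hw, hLw⟩ := exists_mem_Icc_dvd_sub hL (u + a * (Nat.gcdA a b * k))
  have hwn : w ∈ Icc (1 : ℤ) n := Icc_subset_Icc le_rfl hLn hw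
  have haL : (a : ℤ) ∣ Nat.lcm a b := Int.natCast_dvd_natCast.2 (Nat.dvd_lcm_left a b)
  have hbL : (b : ℤ) ∣ Nat.lcm a b := Int.natCast_dvd_natCast.2 (Nat.dvd_lcm_right a b)
  obtain ⟨ℓ₁, h₁⟩ := ha u hu w hwn <| by
    rw [show w - u = (w - (u + a * (Nat.gcdA a b * k))) + a * (Nat.gcdA a b * k) by ring]
    exact dvd_add (haL.trans hLw) (dvd_mul_right _ _)
  obtain ⟨ℓ₂, h₂⟩ := hb w hwn v hv <| by
    rw [show v - w = b * (Nat.gcdB a b * k) - (w - (u + a * (Nat.gcdA a b * k))) by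
      linear_combination hk + k * Nat.gcd_eq_gcd_ab a b]
    exact dvd_sub (dvd_mul_right _ _) (hbL.trans hLw)
  exact ⟨ℓ₁ + ℓ₂, h₁.add h₂⟩

theorem ReachableModulo.finset_gcd {ι : Type*} {b c : ℕ} (hb : ReachableModulo n S T b)
    (hbc : b ∣ c) (hc : 0 < c) (hcn : c ≤ n) (A : Finset ι) (f : ι → ℕ)
    (hA : ∀ i ∈ A, f i ∣ c ∧ ReachableModulo n S T (f i)) :
    ReachableModulo n S T (Nat.gcd (A.gcd f) b) := by
  classical
  induction A using Finset.induction_on with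
  | empty => simpa using hb
  | insert i A hi ih =>
    have ih := ih fun j hj => hA j (mem_insert_of_mem hj)
    rw [Finset.gcd_insert, gcd_eq_nat_gcd, Nat.gcd_assoc]
    obtain ⟨hic, hi⟩ := hA i (mem_insert_self i A)
    exact hi.gcd ih hic ((Nat.gcd_dvd_right _ _).trans hbc) hc hcn

theorem exists_reachableModulo_dvd {s₁ t₁ : ℕ} (hs₁ : s₁ ∈ S) (ht₁ : t₁ ∈ T)
    (hS₀ : ∀ s ∈ S, 0 < s) (hT₀ : ∀ t ∈ T, 0 < t) (hSt₁ : ∀ s ∈ S, s + t₁ ≤ n)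
    (hs₁T : ∀ t ∈ T, s₁ + t ≤ n) :
    ∃ h, h ∣ s₁ ∧ h ∣ sumGcd S T ∧ ReachableModulo n S T h := by
  have hR₁ : ReachableModulo n S T (Nat.gcd (S.gcd (Nat.gcd · t₁)) t₁) :=
    ((reachableModulo_gcd_of_mem hs₁ ht₁ (hS₀ s₁ hs₁) (hT₀ t₁ ht₁) (hSt₁ s₁ hs₁)).of_dvd
      (Nat.gcd_dvd_right _ _)).finset_gcd dvd_rfl (hT₀ t₁ ht₁)
        ((Nat.le_add_left _ _).trans (hSt₁ s₁ hs₁)) S _ fun s hs =>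
          ⟨Nat.gcd_dvd_right _ _,
            reachableModulo_gcd_of_mem hs ht₁ (hS₀ s hs) (hT₀ t₁ ht₁) (hSt₁ s hs)⟩
  have hS : ∀ s ∈ S, Nat.gcd (S.gcd (Nat.gcd · t₁)) t₁ ∣ s := fun s hs =>
    (Nat.gcd_dvd_left _ _).trans ((Finset.gcd_dvd hs).trans (Nat.gcd_dvd_left _ _))
  refine ⟨_, (Nat.gcd_dvd_right _ _).trans (hS s₁ hs₁),
    dvd_sumGcd_iff.2 fun s hs t ht => dvd_add ((Nat.gcd_dvd_right _ _).trans (hS s hs))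
      ((Nat.gcd_dvd_left _ _).trans ((Finset.gcd_dvd ht).trans (Nat.gcd_dvd_right _ _))),
    hR₁.finset_gcd (hS s₁ hs₁) (hS₀ s₁ hs₁) ((Nat.le_add_right _ _).trans (hSt₁ s₁ hs₁)) T
      (Nat.gcd s₁) fun t ht => ⟨Nat.gcd_dvd_left _ _,
        reachableModulo_gcd_of_mem hs₁ ht (hS₀ s₁ hs₁) (hT₀ t ht) (hs₁T t ht)⟩⟩

theorem exists_hasWalk_of_dvd {s₁ t₁ : ℕ} (hs₁ : s₁ ∈ S) (ht₁ : t₁ ∈ T)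
    (hS₀ : ∀ s ∈ S, 0 < s) (hT₀ : ∀ t ∈ T, 0 < t) (hSt₁ : ∀ s ∈ S, s + t₁ ≤ n)
    (hs₁T : ∀ t ∈ T, s₁ + t ≤ n) {m : ℕ} {u x : ℤ} (hu : u ∈ Icc (1 : ℤ) n)
    (hx : x ∈ Icc (1 : ℤ) n) (h : (sumGcd S T : ℤ) ∣ x - u - m * s₁) :
    ∃ ℓ, HasWalk n S T ℓ u x := by
  obtain ⟨H, hHs₁, hHd, hR⟩ := exists_reachableModulo_dvd hs₁ ht₁ hS₀ hT₀ hSt₁ hs₁T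
  refine hR u hu x hx ?_
  rw [show x - u = x - u - m * s₁ + m * s₁ by ring]
  exact dvd_add ((Int.natCast_dvd_natCast.2 hHd).trans h)
    ((Int.natCast_dvd_natCast.2 hHs₁).mul_left _)

end Reachability

section ClosedWalks

variable {n : ℕ} {S T : Finset ℕ}

def closedWalkLengths (n : ℕ) (S T : Finset ℕ) (x : ℤ) : AddSubmonoid ℕ where
  carrier := {ℓ | HasWalk n S T ℓ x x}
  add_mem' := HasWalk.add
  zero_mem' := hasWalk_zero x

theorem div_gcd_add_div_gcd_mem_closedWalkLengths {s t : ℕ} (hs : s ∈ S) (ht : t ∈ T)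
    (hst : s + t ≤ n) {x : ℤ} (hx : x ∈ Icc (1 : ℤ) n) :
    s / Nat.gcd s t + t / Nat.gcd s t ∈ closedWalkLengths n S T x := by
  have h : t / Nat.gcd s t * s = s / Nat.gcd s t * t := by
    rw [Nat.div_mul_right_comm (Nat.gcd_dvd_right s t),
      Nat.div_mul_right_comm (Nat.gcd_dvd_left s t), Nat.mul_comm]
  rw [Nat.add_comm]
  refine hasWalk_of_eq_add_mul_sub_mul hs ht hst _ _ hx hx ?_
  rw [add_sub_assoc, ← Nat.cast_mul, ← Nat.cast_mul, h, sub_self, add_zero]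

theorem gcd_sumGcd_mul_setGcd_closedWalkLengths_dvd {s₁ t₁ : ℕ} (hs₁ : s₁ ∈ S) (ht₁ : t₁ ∈ T)
    (hSt₁ : ∀ s ∈ S, s + t₁ ≤ n) (hs₁T : ∀ t ∈ T, s₁ + t ≤ n) {x : ℤ}
    (hx : x ∈ Icc (1 : ℤ) n) :
    Nat.gcd (sumGcd S T) s₁ * Nat.setGcd (closedWalkLengths n S T x) ∣ sumGcd S T := by
  set g := Nat.gcd (sumGcd S T) s₁
  have hgd : g ∣ sumGcd S T := Nat.gcd_dvd_left _ _
  have hgs₁ : g ∣ s₁ := Nat.gcd_dvd_right _ _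
  have hgT : ∀ t ∈ T, g ∣ t := fun t ht =>
    (Nat.dvd_add_right hgs₁).1 (hgd.trans (sumGcd_dvd_add hs₁ ht))
  have hgS : ∀ s ∈ S, g ∣ s := fun s hs =>
    (Nat.dvd_add_left (hgT t₁ ht₁)).1 (hgd.trans (sumGcd_dvd_add hs ht₁))
  exact dvd_sumGcd_of_dvd_add hs₁
    (fun s hs => Nat.mul_dvd_add_of_dvd_div_gcd_add_div_gcd (hgS s hs) (hgT t₁ ht₁)
      (Nat.setGcd_dvd_of_mem (div_gcd_add_div_gcd_mem_closedWalkLengths hs ht₁ (hSt₁ s hs) hx)))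
    (fun t ht => Nat.mul_dvd_add_of_dvd_div_gcd_add_div_gcd hgs₁ (hgT t ht)
      (Nat.setGcd_dvd_of_mem (div_gcd_add_div_gcd_mem_closedWalkLengths hs₁ ht (hs₁T t ht) hx)))

theorem eventually_hasWalk_self {s₁ t₁ : ℕ} (hs₁ : s₁ ∈ S) (ht₁ : t₁ ∈ T) (hs₁₀ : 0 < s₁)
    (hSt₁ : ∀ s ∈ S, s + t₁ ≤ n) (hs₁T : ∀ t ∈ T, s₁ + t ≤ n) {x : ℤ}
    (hx : x ∈ Icc (1 : ℤ) n) :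
    ∀ᶠ k : ℕ in atTop, (sumGcd S T : ℤ) ∣ k * s₁ → HasWalk n S T k x x := by
  obtain ⟨N, hN⟩ := Nat.exists_mem_closure_of_ge (closedWalkLengths n S T x : Set ℕ)
  filter_upwards [eventually_ge_atTop N] with k hk hdvd
  have hd : 0 < sumGcd S T := Nat.pos_of_dvd_of_pos (sumGcd_dvd_add hs₁ ht₁) (by omega)
  have := hN k hk <| Nat.dvd_of_gcd_mul_dvd_of_dvd_mul hd
    (gcd_sumGcd_mul_setGcd_closedWalkLengths_dvd hs₁ ht₁ hSt₁ hs₁T hx) (by exact_mod_cast hdvd)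
  rwa [AddSubmonoid.closure_eq] at this

theorem HasWalk.eventually_hasWalk {d c : ℤ} (hS : ∀ s ∈ S, d ∣ s - c) (hT : ∀ t ∈ T, d ∣ -t - c)
    {ℓ : ℕ} {u x : ℤ} (h : HasWalk n S T ℓ u x)
    (hx : ∀ᶠ k : ℕ in atTop, d ∣ k * c → HasWalk n S T k x x) :
    ∀ᶠ m : ℕ in atTop, d ∣ x - u - m * c → HasWalk n S T m u x := by
  filter_upwards [(tendsto_sub_atTop_nat ℓ).eventually hx, eventually_ge_atTop ℓ]
    with m hm hℓm hdvd
  refine Nat.add_sub_cancel' hℓm ▸ h.add (hm ?_)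
  rw [show ((m - ℓ : ℕ) : ℤ) * c = x - u - ℓ * c - (x - u - m * c) by push_cast [hℓm]; ring]
  exact dvd_sub (h.dvd_sub_sub_mul hS hT) hdvd

theorem eventually_forall_hasWalk {s₁ t₁ : ℕ} (hs₁ : s₁ ∈ S) (ht₁ : t₁ ∈ T)
    (hS₀ : ∀ s ∈ S, 0 < s) (hT₀ : ∀ t ∈ T, 0 < t) (hSt₁ : ∀ s ∈ S, s + t₁ ≤ n)
    (hs₁T : ∀ t ∈ T, s₁ + t ≤ n) :
    ∀ᶠ m : ℕ in atTop, ∀ u ∈ Icc (1 : ℤ) n, ∀ x ∈ Icc (1 : ℤ) n,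
      (sumGcd S T : ℤ) ∣ x - u - m * s₁ → HasWalk n S T m u x := by
  simp only [eventually_all_finset]
  intro u hu x hx
  by_cases h : ∃ ℓ, HasWalk n S T ℓ u x
  · obtain ⟨ℓ, h⟩ := h
    exact h.eventually_hasWalk (fun s hs => sumGcd_dvd_sub_of_mem_left hs hs₁ ht₁)
      (fun t ht => sumGcd_dvd_neg_sub_of_mem_right ht hs₁)
      (eventually_hasWalk_self hs₁ ht₁ (hS₀ s₁ hs₁) hSt₁ hs₁T hx)
  · exact .of_forall fun m hm =>
      (h (exists_hasWalk_of_dvd hs₁ ht₁ hS₀ hT₀ hSt₁ hs₁T hu hx hm)).elim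

theorem compAdj_iff_dvd_sub {d s₁ m : ℕ} (hS : ∀ s ∈ S, (d : ℤ) ∣ s - s₁)
    (hT : ∀ t ∈ T, (d : ℤ) ∣ -t - s₁) (hd : 0 < d) (hdn : d ≤ n)
    (hwalk : ∀ u ∈ Icc (1 : ℤ) n, ∀ x ∈ Icc (1 : ℤ) n,
      (d : ℤ) ∣ x - u - m * s₁ → HasWalk n S T m u x)
    {u v : ℤ} (hu : u ∈ Icc (1 : ℤ) n) (hv : v ∈ Icc (1 : ℤ) n) (huv : u ≠ v) :
    CompAdj n S T m u v ↔ (d : ℤ) ∣ u - v := by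
  constructor
  · rintro ⟨-, x, hux, hvx⟩
    rw [show u - v = x - v - m * s₁ - (x - u - m * s₁) by ring]
    exact dvd_sub (hvx.dvd_sub_sub_mul hS hT) (hux.dvd_sub_sub_mul hS hT)
  · intro h
    obtain ⟨x, hx, hdx⟩ := exists_mem_Icc_dvd_sub hd (u + m * s₁)
    have hx : x ∈ Icc (1 : ℤ) n := Icc_subset_Icc le_rfl (by exact_mod_cast hdn) hx
    refine ⟨huv, x, hwalk u hu x hx (by rwa [sub_sub]), hwalk v hv x hx ?_⟩
    rw [show x - v - m * s₁ = x - (u + m * s₁) + (u - v) by ring]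
    exact dvd_add hdx h

end ClosedWalks

theorem limit_competition_graph_general (n : ℕ) (S T : Finset ℕ)
    (hS : S.Nonempty) (hT : T.Nonempty)
    (hSsub : S ⊆ Finset.Icc 1 (n - 1)) (hTsub : T ⊆ Finset.Icc 1 (n - 1))
    (hST1 : S.max' hS + T.min' hT ≤ n) (hST2 : S.min' hS + T.max' hT ≤ n)
    (d : ℕ) (hd : d = (S ×ˢ T).gcd (fun p => p.1 + p.2)) :
    ∃ M : ℕ, 0 < M ∧ ∀ m : ℕ, M ≤ m →
      ∀ u ∈ Finset.Icc (1 : ℤ) (n : ℤ), ∀ v ∈ Finset.Icc (1 : ℤ) (n : ℤ), u ≠ v →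
        (CompAdj n S T m u v ↔ (d : ℤ) ∣ u - v) := by
  have hs₁ := S.min'_mem hS
  have ht₁ := T.min'_mem hT
  have hS₀ : ∀ s ∈ S, 0 < s := fun s hs => (mem_Icc.1 (hSsub hs)).1
  have hT₀ : ∀ t ∈ T, 0 < t := fun t ht => (mem_Icc.1 (hTsub ht)).1
  have hSt₁ : ∀ s ∈ S, s + T.min' hT ≤ n := fun s hs =>
    (Nat.add_le_add_right (S.le_max' s hs) _).trans hST1
  have hs₁T : ∀ t ∈ T, S.min' hS + t ≤ n := fun t ht =>
    (Nat.add_le_add_left (T.le_max' t ht) _).trans hST2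
  have hpos : 0 < S.min' hS + T.min' hT := Nat.add_pos_left (hS₀ _ hs₁) _
  have hd₀ : 0 < sumGcd S T := Nat.pos_of_dvd_of_pos (sumGcd_dvd_add hs₁ ht₁) hpos
  have hdn : sumGcd S T ≤ n := le_trans (Nat.le_of_dvd hpos (sumGcd_dvd_add hs₁ ht₁)) (hSt₁ _ hs₁)
  obtain ⟨M, hM⟩ := eventually_atTop.1 (eventually_forall_hasWalk hs₁ ht₁ hS₀ hT₀ hSt₁ hs₁T)
  subst hd
  exact ⟨M + 1, M.succ_pos, fun m hm u hu v hv huv =>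
    compAdj_iff_dvd_sub (fun s hs => sumGcd_dvd_sub_of_mem_left hs hs₁ ht₁)
      (fun t ht => sumGcd_dvd_neg_sub_of_mem_right ht hs₁) hd₀ hdn (hM m (by omega)) hu hv huv⟩

/-- If `max S + min T ≤ n` and `min S + max T ≤ n`, then for all
sufficiently large `m`, distinct vertices `u, v` are adjacent in `C^m(D)` iff
`u ≡ v (mod d)` where `d = gcd{s + t : s ∈ S, t ∈ T}`. -/
theorem limit_competition_graph (n : ℕ) (hn : 2 ≤ n) (S T : Finset ℕ)
    (hS : S.Nonempty) (hT : T.Nonempty)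
    (hSsub : S ⊆ Finset.Icc 1 (n - 1)) (hTsub : T ⊆ Finset.Icc 1 (n - 1))
    (hST1 : S.max' hS + T.min' hT ≤ n) (hST2 : S.min' hS + T.max' hT ≤ n)
    (d : ℕ) (hd : d = (S ×ˢ T).gcd (fun p => p.1 + p.2)) :
    ∃ M : ℕ, 0 < M ∧ ∀ m : ℕ, M ≤ m →
      ∀ u ∈ Finset.Icc (1 : ℤ) (n : ℤ), ∀ v ∈ Finset.Icc (1 : ℤ) (n : ℤ), u ≠ v →
        (CompAdj n S T m u v ↔ (d : ℤ) ∣ u - v) :=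
  limit_competition_graph_general n S T hS hT hSsub hTsub hST1 hST2 d hd
end

section
/- Let S = {s_1 < ⋯ < s_{k_1}} and T = {t_1 < ⋯ < t_{k_2}} be nonempty subsets of {1, …, n−1}, let d = gcd{s + t : s ∈ S, t ∈ T}, and for a positive integer i let P_i = {ℓ ∈ ℤ : −(n−1) ≤ ℓ ≤ n−1 and ℓ ≡ i·s_1 (mod d)}. Then for every integer i ≥ 2, P_i = {ℓ ∈ ℤ : −(n−1) ≤ ℓ ≤ n−1, and ℓ − s_1 ∈ P_{i−1} or ℓ + t_1 ∈ P_{i−1}}. -/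
/-!
Every `ℓ ≡ i·s₁ (mod d)` in the window `[-(n-1), n-1]` has a predecessor `ℓ - s₁` or `ℓ + t₁`
in the same window, and both are `≡ (i-1)·s₁ (mod d)`, the second because `d ∣ s₁ + t₁`. If `ℓ - s₁` falls
below the window, then `ℓ + t₁ < s₁ + t₁ - (n-1) ≤ n-1`, so `ℓ + t₁` lies in it.
-/

def residueWindow (M d c : ℤ) : Set ℤ :=
  {ℓ | -M ≤ ℓ ∧ ℓ ≤ M ∧ d ∣ ℓ - c}

theorem residueWindow_eq_sub_or_add {M a b c d : ℤ} (ha : 0 ≤ a) (hb : 0 ≤ b)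
    (hab : a + b ≤ 2 * M) (hd : d ∣ a + b) :
    residueWindow M d c = {ℓ | -M ≤ ℓ ∧ ℓ ≤ M ∧
      (ℓ - a ∈ residueWindow M d (c - a) ∨ ℓ + b ∈ residueWindow M d (c - a))} := by
  have hsub (ℓ : ℤ) : d ∣ ℓ - a - (c - a) ↔ d ∣ ℓ - c := by rw [sub_sub_sub_cancel_right]
  have hadd (ℓ : ℤ) : d ∣ ℓ + b - (c - a) ↔ d ∣ ℓ - c := by
    rw [show ℓ + b - (c - a) = ℓ - c + (a + b) by ring]
    exact dvd_add_left hd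
  ext ℓ
  simp only [residueWindow, Set.mem_ofPred_eq, hsub, hadd]
  constructor
  · rintro ⟨hlo, hhi, hdvd⟩
    refine ⟨hlo, hhi, ?_⟩
    by_cases hstay : -M ≤ ℓ - a
    · exact Or.inl ⟨hstay, by omega, hdvd⟩
    · exact Or.inr ⟨by omega, by omega, hdvd⟩
  · rintro ⟨hlo, hhi, ⟨-, -, hdvd⟩ | ⟨-, -, hdvd⟩⟩ <;> exact ⟨hlo, hhi, hdvd⟩

theorem P_recursion_general (n k₁ k₂ : ℕ)
    (s : Fin (k₁ + 1) → ℕ) (t : Fin (k₂ + 1) → ℕ)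
    (hsmem : ∀ i, s i ∈ Finset.Icc 1 (n - 1)) (htmem : ∀ j, t j ∈ Finset.Icc 1 (n - 1))
    (d : ℕ)
    (hd : d = Finset.univ.gcd (fun p : Fin (k₁ + 1) × Fin (k₂ + 1) => s p.1 + t p.2))
    (P : ℕ → Set ℤ)
    (hP : ∀ i, P i =
      {ℓ : ℤ | -((n : ℤ) - 1) ≤ ℓ ∧ ℓ ≤ (n : ℤ) - 1 ∧ (d : ℤ) ∣ ℓ - (i : ℤ) * (s 0 : ℤ)})
    (i : ℕ) (hi : 2 ≤ i) :
    P i = {ℓ : ℤ | -((n : ℤ) - 1) ≤ ℓ ∧ ℓ ≤ (n : ℤ) - 1 ∧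
      (ℓ - (s 0 : ℤ) ∈ P (i - 1) ∨ ℓ + (t 0 : ℤ) ∈ P (i - 1))} := by
  have hPwin (j : ℕ) : P j = residueWindow ((n : ℤ) - 1) d (j * s 0) := hP j
  have hdvd : (d : ℤ) ∣ (s 0 : ℤ) + (t 0 : ℤ) := by
    rw [hd]
    exact_mod_cast Finset.gcd_dvd (f := fun p : Fin (k₁ + 1) × Fin (k₂ + 1) => s p.1 + t p.2)
      (Finset.mem_univ (0, 0))
  have hs0 := Finset.mem_Icc.mp (hsmem 0)
  have ht0 := Finset.mem_Icc.mp (htmem 0)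
  have hprev : ((i - 1 : ℕ) : ℤ) * s 0 = i * s 0 - s 0 := by
    rw [Nat.cast_sub (by omega), Nat.cast_one, sub_one_mul]
  rw [hPwin, hPwin, hprev]
  exact residueWindow_eq_sub_or_add (by positivity) (by positivity) (by omega) hdvd

/-- With `P_i = {ℓ ∈ [−(n−1), n−1] : ℓ ≡ i·s_1 (mod d)}`, for every
`i ≥ 2` we have `P_i = {ℓ ∈ [−(n−1), n−1] : ℓ − s_1 ∈ P_{i−1} or ℓ + t_1 ∈ P_{i−1}}`. -/
theorem P_recursion (n k₁ k₂ : ℕ) (hn : 2 ≤ n)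
    (s : Fin (k₁ + 1) → ℕ) (t : Fin (k₂ + 1) → ℕ)
    (hs : StrictMono s) (ht : StrictMono t)
    (hsmem : ∀ i, s i ∈ Finset.Icc 1 (n - 1)) (htmem : ∀ j, t j ∈ Finset.Icc 1 (n - 1))
    (d : ℕ)
    (hd : d = Finset.univ.gcd (fun p : Fin (k₁ + 1) × Fin (k₂ + 1) => s p.1 + t p.2))
    (P : ℕ → Set ℤ)
    (hP : ∀ i, P i =
      {ℓ : ℤ | -((n : ℤ) - 1) ≤ ℓ ∧ ℓ ≤ (n : ℤ) - 1 ∧ (d : ℤ) ∣ ℓ - (i : ℤ) * (s 0 : ℤ)})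
    (i : ℕ) (hi : 2 ≤ i) :
    P i = {ℓ : ℤ | -((n : ℤ) - 1) ≤ ℓ ∧ ℓ ≤ (n : ℤ) - 1 ∧
      (ℓ - (s 0 : ℤ) ∈ P (i - 1) ∨ ℓ + (t 0 : ℤ) ∈ P (i - 1))} :=
  P_recursion_general n k₁ k₂ s t hsmem htmem d hd P hP i hi
end

section
/- Let D be the Toeplitz digraph of T_n⟨S;T⟩ and let u < v be vertices of D. Then u and v are adjacent in the competition graph C(D) if and only if at least one of the following holds: (1) v − u = s − s' for some s ∈ S with s ≤ n − u and some s' ∈ S with s' ≤ n − v; (2) v − u = t − t' for some t ∈ T with t ≤ v − 1 and some t' ∈ T with t' ≤ u − 1; (3) v − u = s + t for some s ∈ S and t ∈ T. -/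
theorem toepArc_iff {n : ℕ} {S T : Finset ℕ} {u w : ℤ} (hu : u ∈ Finset.Icc (1 : ℤ) (n : ℤ)) :
    ToepArc n S T u w ↔
      (∃ s ∈ S, (s : ℤ) ≤ (n : ℤ) - u ∧ w = u + (s : ℤ)) ∨
        (∃ t ∈ T, (t : ℤ) ≤ u - 1 ∧ w = u - (t : ℤ)) := by
  obtain ⟨hu1, hun⟩ := Finset.mem_Icc.mp hu
  constructor
  · rintro ⟨-, hw, ⟨s, hs, rfl⟩ | ⟨t, ht, rfl⟩⟩ <;> rw [Finset.mem_Icc] at hw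
    · exact Or.inl ⟨s, hs, by omega, rfl⟩
    · exact Or.inr ⟨t, ht, by omega, rfl⟩
  · rintro (⟨s, hs, hsu, rfl⟩ | ⟨t, ht, htu, rfl⟩)
    · exact ⟨hu, Finset.mem_Icc.mpr ⟨by omega, by omega⟩, Or.inl ⟨s, hs, rfl⟩⟩
    · exact ⟨hu, Finset.mem_Icc.mpr ⟨by omega, by omega⟩, Or.inr ⟨t, ht, rfl⟩⟩

theorem competition_graph_characterization_general (n : ℕ) (S T : Finset ℕ)
    (u v : ℤ) (hu : u ∈ Finset.Icc (1 : ℤ) (n : ℤ)) (hv : v ∈ Finset.Icc (1 : ℤ) (n : ℤ))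
    (huv : u < v) :
    (∃ w : ℤ, ToepArc n S T u w ∧ ToepArc n S T v w) ↔
      ((∃ s ∈ S, ∃ s' ∈ S, (s : ℤ) ≤ (n : ℤ) - u ∧ (s' : ℤ) ≤ (n : ℤ) - v ∧
          v - u = (s : ℤ) - (s' : ℤ)) ∨
        (∃ t ∈ T, ∃ t' ∈ T, (t : ℤ) ≤ v - 1 ∧ (t' : ℤ) ≤ u - 1 ∧
          v - u = (t : ℤ) - (t' : ℤ)) ∨
        (∃ s ∈ S, ∃ t ∈ T, v - u = (s : ℤ) + (t : ℤ))) := by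
  simp_rw [toepArc_iff hu, toepArc_iff hv]
  obtain ⟨hu1, -⟩ := Finset.mem_Icc.mp hu
  obtain ⟨-, hvn⟩ := Finset.mem_Icc.mp hv
  constructor
  · rintro ⟨w, ⟨s, hs, hsu, rfl⟩ | ⟨t, ht, htu, rfl⟩, ⟨s', hs', hs'v, hw⟩ | ⟨t', ht', ht'v, hw⟩⟩
    · exact Or.inl ⟨s, hs, s', hs', hsu, hs'v, by omega⟩
    · exact Or.inr (Or.inr ⟨s, hs, t', ht', by omega⟩)
    -- an arc leaving `u` downwards and an arc leaving `v > u` upwards cannot meet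
    · omega
    · exact Or.inr (Or.inl ⟨t', ht', t, ht, ht'v, htu, by omega⟩)
  · rintro (⟨s, hs, s', hs', hsu, hs'v, hd⟩ | ⟨t, ht, t', ht', htv, ht'u, hd⟩ | ⟨s, hs, t, ht, hd⟩)
    · exact ⟨u + s, Or.inl ⟨s, hs, hsu, rfl⟩, Or.inl ⟨s', hs', hs'v, by omega⟩⟩
    · exact ⟨u - t', Or.inr ⟨t', ht', ht'u, rfl⟩, Or.inr ⟨t, ht, htv, by omega⟩⟩
    · exact ⟨u + s, Or.inl ⟨s, hs, by omega, rfl⟩, Or.inr ⟨t, ht, by omega, by omega⟩⟩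

/-- For vertices `u < v` of the Toeplitz digraph `D` of `T_n⟨S;T⟩`,
`u` and `v` are adjacent in the competition graph `C(D)` (i.e. have a common
out-neighbor) iff `v − u = s − s'` with `s ≤ n − u`, `s' ≤ n − v`, or
`v − u = t − t'` with `t ≤ v − 1`, `t' ≤ u − 1`, or `v − u = s + t`. -/
theorem competition_graph_characterization (n : ℕ) (hn : 2 ≤ n) (S T : Finset ℕ)
    (hS : S.Nonempty) (hT : T.Nonempty)
    (hSsub : S ⊆ Finset.Icc 1 (n - 1)) (hTsub : T ⊆ Finset.Icc 1 (n - 1))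
    (u v : ℤ) (hu : u ∈ Finset.Icc (1 : ℤ) (n : ℤ)) (hv : v ∈ Finset.Icc (1 : ℤ) (n : ℤ))
    (huv : u < v) :
    (∃ w : ℤ, ToepArc n S T u w ∧ ToepArc n S T v w) ↔
      ((∃ s ∈ S, ∃ s' ∈ S, (s : ℤ) ≤ (n : ℤ) - u ∧ (s' : ℤ) ≤ (n : ℤ) - v ∧
          v - u = (s : ℤ) - (s' : ℤ)) ∨
        (∃ t ∈ T, ∃ t' ∈ T, (t : ℤ) ≤ v - 1 ∧ (t' : ℤ) ≤ u - 1 ∧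
          v - u = (t : ℤ) - (t' : ℤ)) ∨
        (∃ s ∈ S, ∃ t ∈ T, v - u = (s : ℤ) + (t : ℤ))) :=
  competition_graph_characterization_general n S T u v hu hv huv
end

section
/- Let S = {s_1 < ⋯ < s_{k_1}} and T = {t_1 < ⋯ < t_{k_2}} be nonempty subsets of {1, …, n−1} with n ≥ max S + max T. Let m ∈ {1, …, n} and let a_1, …, a_{k_1}, b_1, …, b_{k_2} be nonnegative integers, not all zero, satisfying 1 ≤ m + Σ_{i=1}^{k_1} a_i s_i − Σ_{j=1}^{k_2} b_j t_j ≤ n. Then there exists a finite sequence c_1, …, c_N of integers with N = Σ_{i=1}^{k_1} a_i + Σ_{j=1}^{k_2} b_j such that: for each i ∈ {1,…,k_1}, exactly a_i of the terms equal s_i; for each j ∈ {1,…,k_2}, exactly b_j of the terms equal −t_j; and every partial sum c_1 + ⋯ + c_k (1 ≤ k ≤ N) lies between 1 − m and n − m. -/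
/-!
Arrange the steps greedily, keeping track of the current position `p` in the window `[lo, hi]`:
take an upward step if one still fits below `hi`, and otherwise a downward step. A downward step
`y` is then safe, because either some upward step `x` overshoots, so that `p + x > hi` and
`x - y ≤ hi - lo + 1` give `p + y ≥ lo`; or only downward steps remain, and then `p + y` is at
least the final position. When every step is upward, every step fits below the final position.
For the rearrangement lemma the window is `[1 - m, n - m]` and `x - y ≤ max S + max T ≤ n`.
-/

open Finset Function

namespace List

theorem map_getD_range_eq_take {α : Type*} (L : List α) (d : α) {k : ℕ} (hk : k ≤ L.length) :
    (range k).map (fun i => L.getD i d) = L.take k := by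
  refine ext_getElem (by simp only [length_map, length_range, length_take]; omega) fun i _ hi => ?_
  simp only [length_take] at hi
  simp [getElem?_eq_getElem (by omega : i < L.length)]

theorem sum_range_getD_eq_sum_take {M : Type*} [AddCommMonoid M] (L : List M) {k : ℕ}
    (hk : k ≤ L.length) : ∑ i ∈ Finset.range k, L.getD i 0 = (L.take k).sum := by
  rw [← L.map_getD_range_eq_take 0 hk, Finset.sum_eq_multiset_sum]
  simp [Multiset.range]

theorem card_filter_range_getD_eq_count {α : Type*} [DecidableEq α] (L : List α) (d v : α) :
    #{i ∈ Finset.range L.length | L.getD i d = v} = L.count v := by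
  rw [← Multiset.coe_count]
  conv_rhs => rw [← L.take_length, ← L.map_getD_range_eq_take d le_rfl, ← Multiset.map_coe,
    ← Multiset.range, Multiset.count_map]
  simp [Finset.card, eq_comm]

end List

namespace Multiset

theorem count_sum_replicate_of_injective {ι α : Type*} [Fintype ι] [DecidableEq α] {w : ι → α}
    (hw : Injective w) (μ : ι → ℕ) (i : ι) : count (w i) (∑ j, replicate (μ j) (w j)) = μ i := by
  classical
  simp [count_sum', count_replicate, hw.eq_iff]

theorem exists_mem_add_mem_Icc {lo hi p : ℤ} {M : Multiset ℤ} (hM : M ≠ 0)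
    (hgap : ∀ x ∈ M, ∀ y ∈ M, 0 < x → y < 0 → x - y ≤ hi - lo + 1)
    (hp : p ∈ Set.Icc lo hi) (hpM : p + M.sum ∈ Set.Icc lo hi) :
    ∃ x ∈ M, p + x ∈ Set.Icc lo hi := by
  simp only [Set.mem_Icc] at *
  by_cases hneg : ∃ y ∈ M, y < 0
  · obtain ⟨y, hy, hy0⟩ := hneg
    by_cases hpos : ∃ x ∈ M, 0 < x
    · obtain ⟨x, hx, hx0⟩ := hpos
      by_cases hfit : p + x ≤ hi
      · exact ⟨x, hx, by omega, hfit⟩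
      · exact ⟨y, hy, by linarith [hgap x hx y hy hx0 hy0], by omega⟩
    · push Not at hpos
      have hsum_le : M.sum ≤ y := single_le_sum (α := ℤᵒᵈ) hpos y hy
      exact ⟨y, hy, by omega, by omega⟩
  · push Not at hneg
    obtain ⟨x, hx⟩ := exists_mem_of_ne_zero hM
    exact ⟨x, hx, by linarith [hneg x hx], by linarith [single_le_sum hneg x hx]⟩

theorem exists_coe_eq_forall_add_sum_take_mem_Icc {lo hi : ℤ} (M : Multiset ℤ)
    (hgap : ∀ x ∈ M, ∀ y ∈ M, 0 < x → y < 0 → x - y ≤ hi - lo + 1) {p : ℤ}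
    (hp : p ∈ Set.Icc lo hi) (hpM : p + M.sum ∈ Set.Icc lo hi) :
    ∃ L : List ℤ, (L : Multiset ℤ) = M ∧ ∀ k, p + (L.take k).sum ∈ Set.Icc lo hi := by
  induction M using strongInductionOn generalizing p with
  | ih M ih =>
  rcases eq_or_ne M 0 with rfl | hM
  · exact ⟨[], rfl, by simpa using hp⟩
  obtain ⟨x, hx, hpx⟩ := exists_mem_add_mem_Icc hM hgap hp hpM
  obtain ⟨L, hLM, hL⟩ := ih (M.erase x) (erase_lt.2 hx)
    (fun y hy z hz => hgap y (mem_of_mem_erase hy) z (mem_of_mem_erase hz)) hpx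
    (by rwa [add_assoc, sum_erase hx])
  refine ⟨x :: L, by rw [← cons_coe, hLM, cons_erase hx], fun k => ?_⟩
  cases k with
  | zero => simpa using hp
  | succ k => simpa [add_assoc] using hL k

end Multiset

theorem exists_arrangement_partial_sums_mem_Icc {ι : Type*} [Fintype ι] {w : ι → ℤ}
    (hw : Injective w) (μ : ι → ℕ) {lo hi : ℤ}
    (hgap : ∀ i j, 0 < w i → w j < 0 → w i - w j ≤ hi - lo + 1)
    (h0 : 0 ∈ Set.Icc lo hi) (hsum : ∑ i, (μ i : ℤ) * w i ∈ Set.Icc lo hi) :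
    ∃ c : ℕ → ℤ, (∀ k < ∑ i, μ i, ∃ i, c k = w i) ∧
      (∀ i, #{k ∈ range (∑ i, μ i) | c k = w i} = μ i) ∧
      ∀ k ≤ ∑ i, μ i, ∑ l ∈ range k, c l ∈ Set.Icc lo hi := by
  classical
  set M : Multiset ℤ := ∑ i, Multiset.replicate (μ i) (w i)
  have hmem : ∀ x ∈ M, ∃ i, x = w i := fun x hx => by
    obtain ⟨i, -, hi⟩ := Multiset.mem_sum.1 hx
    exact ⟨i, Multiset.eq_of_mem_replicate hi⟩
  obtain ⟨L, hLM, hL⟩ := M.exists_coe_eq_forall_add_sum_take_mem_Icc (p := 0)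
    (fun x hx y hy => by
      obtain ⟨i, rfl⟩ := hmem x hx
      obtain ⟨j, rfl⟩ := hmem y hy
      exact hgap i j) h0
    (by simpa [M, Multiset.sum_sum, Multiset.sum_replicate] using hsum)
  have hlen : L.length = ∑ i, μ i := by
    rw [← Multiset.coe_card, hLM]
    simp [M, Multiset.card_sum]
  refine ⟨fun k => L.getD k 0, fun k hk => ?_, fun i => ?_, fun k hk => ?_⟩
  · refine hmem (L.getD k 0) ?_
    rw [← hLM, List.getD_eq_getElem _ _ (hlen ▸ hk)]
    exact Multiset.mem_coe.2 (List.getElem_mem _)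
  · rw [← hlen, List.card_filter_range_getD_eq_count, ← Multiset.coe_count, hLM,
      Multiset.count_sum_replicate_of_injective hw]
  · rw [List.sum_range_getD_eq_sum_take _ (hlen ▸ hk)]
    simpa using hL k

theorem rearrangement_lemma_general (n k₁ k₂ : ℕ)
    (s : Fin (k₁ + 1) → ℕ) (t : Fin (k₂ + 1) → ℕ)
    (hs : StrictMono s) (ht : StrictMono t)
    (hsmem : ∀ i, s i ∈ Finset.Icc 1 (n - 1))
    (hmax : s (Fin.last k₁) + t (Fin.last k₂) ≤ n)
    (m : ℕ) (hm1 : 1 ≤ m) (hmn : m ≤ n)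
    (a : Fin (k₁ + 1) → ℕ) (b : Fin (k₂ + 1) → ℕ)
    (hrange1 : 1 ≤ (m : ℤ) + ∑ i, (a i : ℤ) * (s i : ℤ) - ∑ j, (b j : ℤ) * (t j : ℤ))
    (hrange2 : (m : ℤ) + ∑ i, (a i : ℤ) * (s i : ℤ) - ∑ j, (b j : ℤ) * (t j : ℤ) ≤ n) :
    ∃ c : ℕ → ℤ,
      (∀ k < (∑ i, a i) + (∑ j, b j), (∃ i, c k = (s i : ℤ)) ∨ (∃ j, c k = -(t j : ℤ))) ∧
      (∀ i, ((Finset.range ((∑ i, a i) + (∑ j, b j))).filter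
        (fun k => c k = (s i : ℤ))).card = a i) ∧
      (∀ j, ((Finset.range ((∑ i, a i) + (∑ j, b j))).filter
        (fun k => c k = -(t j : ℤ))).card = b j) ∧
      (∀ k : ℕ, 1 ≤ k → k ≤ (∑ i, a i) + (∑ j, b j) →
        1 - (m : ℤ) ≤ ∑ l ∈ Finset.range k, c l ∧
        ∑ l ∈ Finset.range k, c l ≤ (n : ℤ) - (m : ℤ)) := by
  set w : Fin (k₁ + 1) ⊕ Fin (k₂ + 1) → ℤ := Sum.elim (fun i => (s i : ℤ)) fun j => -(t j : ℤ)
  have hw : Injective w :=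
    (Nat.cast_injective.comp hs.injective).sumElim
      (neg_injective.comp (Nat.cast_injective.comp ht.injective)) fun i j => by
        have := (mem_Icc.1 (hsmem i)).1
        simp only [comp_apply]
        omega
  have hgap : ∀ x y, 0 < w x → w y < 0 → w x - w y ≤ (n - m : ℤ) - (1 - m) + 1 := by
    rintro (i | i) (j | j) hx hy <;> simp only [w, Sum.elim_inl, Sum.elim_inr] at hx hy ⊢
    case inl.inr =>
      have := add_le_add (hs.monotone (Fin.le_last i)) (ht.monotone (Fin.le_last j))
      omega
    all_goals omega
  have hsum : ∑ x, ((Sum.elim a b x : ℕ) : ℤ) * w x =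
      ∑ i, (a i : ℤ) * (s i : ℤ) - ∑ j, (b j : ℤ) * (t j : ℤ) := by
    simp [Fintype.sum_sum_type, w, sub_eq_add_neg]
  obtain ⟨c, hc_mem, hc_count, hc_sum⟩ := exists_arrangement_partial_sums_mem_Icc hw
    (Sum.elim a b) hgap ⟨by omega, by omega⟩ (hsum ▸ ⟨by omega, by omega⟩)
  simp only [Fintype.sum_sum_type, Sum.elim_inl, Sum.elim_inr, w] at hc_mem hc_count hc_sum
  refine ⟨c, fun k hk => ?_, fun i => hc_count (.inl i), fun j => hc_count (.inr j),
    fun k _ hk => hc_sum k hk⟩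
  obtain ⟨i | j, h⟩ := hc_mem k hk
  exacts [.inl ⟨i, h⟩, .inr ⟨j, h⟩]

/-- (Rearrangement lemma.) Let `S = {s_1 < ⋯ < s_{k₁}}` and
`T = {t_1 < ⋯ < t_{k₂}}` be subsets of `{1, …, n−1}` with `n ≥ max S + max T`, let
`m ∈ {1, …, n}`, and let `a_i, b_j` be nonnegative integers, not all zero, with
`1 ≤ m + Σ a_i s_i − Σ b_j t_j ≤ n`. Then the multiset consisting of `a_i` copies of
`s_i` and `b_j` copies of `−t_j` can be arranged into a sequence all of whose partial
sums lie between `1 − m` and `n − m`. -/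
theorem rearrangement_lemma (n k₁ k₂ : ℕ) (hn : 2 ≤ n)
    (s : Fin (k₁ + 1) → ℕ) (t : Fin (k₂ + 1) → ℕ)
    (hs : StrictMono s) (ht : StrictMono t)
    (hsmem : ∀ i, s i ∈ Finset.Icc 1 (n - 1)) (htmem : ∀ j, t j ∈ Finset.Icc 1 (n - 1))
    (hmax : s (Fin.last k₁) + t (Fin.last k₂) ≤ n)
    (m : ℕ) (hm1 : 1 ≤ m) (hmn : m ≤ n)
    (a : Fin (k₁ + 1) → ℕ) (b : Fin (k₂ + 1) → ℕ)
    (hab : 0 < (∑ i, a i) + (∑ j, b j))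
    (hrange1 : 1 ≤ (m : ℤ) + ∑ i, (a i : ℤ) * (s i : ℤ) - ∑ j, (b j : ℤ) * (t j : ℤ))
    (hrange2 : (m : ℤ) + ∑ i, (a i : ℤ) * (s i : ℤ) - ∑ j, (b j : ℤ) * (t j : ℤ) ≤ n) :
    ∃ c : ℕ → ℤ,
      (∀ k < (∑ i, a i) + (∑ j, b j), (∃ i, c k = (s i : ℤ)) ∨ (∃ j, c k = -(t j : ℤ))) ∧
      (∀ i, ((Finset.range ((∑ i, a i) + (∑ j, b j))).filter
        (fun k => c k = (s i : ℤ))).card = a i) ∧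
      (∀ j, ((Finset.range ((∑ i, a i) + (∑ j, b j))).filter
        (fun k => c k = -(t j : ℤ))).card = b j) ∧
      (∀ k : ℕ, 1 ≤ k → k ≤ (∑ i, a i) + (∑ j, b j) →
        1 - (m : ℤ) ≤ ∑ l ∈ Finset.range k, c l ∧
        ∑ l ∈ Finset.range k, c l ≤ (n : ℤ) - (m : ℤ)) :=
  rearrangement_lemma_general n k₁ k₂ s t hs ht hsmem hmax m hm1 hmn a b hrange1 hrange2
end

section
/- Let D be the Toeplitz digraph of T_n⟨S;T⟩ with S = {s_1 < ⋯ < s_{k_1}}, T = {t_1 < ⋯ < t_{k_2}}, max S + min T ≤ n and min S + max T ≤ n. Then for every vertex v of D and all nonnegative integers a_2, …, a_{k_1}, b_2, …, b_{k_2}, there exist a nonnegative integer ℓ and a directed walk of length ℓ in D starting at v that contains exactly a_i s_i-arcs for each 2 ≤ i ≤ k_1 and exactly b_j t_j-arcs for each 2 ≤ j ≤ k_2, where ℓ ≤ (a_2 + ⋯ + a_{k_1} + b_2 + ⋯ + b_{k_2})·(max{⌈t_{k_2}/s_1⌉, ⌈s_{k_1}/t_1⌉} + 1). -/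
/-- The number of steps of the walk `w 0, w 1, …, w ℓ` whose difference
`w (k+1) − w k` equals `x`.  Taking `x = s_i` counts the `s_i`-arcs of the walk;
taking `x = −t_j` counts its `t_j`-arcs. -/
def ArcCount (w : ℕ → ℤ) (ℓ : ℕ) (x : ℤ) : ℕ :=
  ((Finset.range ℓ).filter (fun k => w (k + 1) - w k = x)).card

/-! Each prescribed arc can be inserted from any vertex `p` at the cost of at most
`M = max ⌈t_{k₂}/s_1⌉ ⌈s_{k₁}/t_1⌉` filler arcs. Before an `s_i`-arc, descend by `t_1`-arcs
just until `p + s_i ≤ n`: as `s_i + t_1 ≤ n`, the least such number of descents keeps the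
walk inside `[1, n]`, and it is at most `⌈s_i/t_1⌉`. The reflection `u ↦ n + 1 − u`
exchanges `S` and `T` and gives the same gadget for `t_j`-arcs; chaining one gadget per
prescribed arc yields the walk. -/

/-- A walk from `p` recorded by its steps `L`: its vertices are the partial sums
`p + (L.take k).sum`. -/
def IsStepWalk (n : ℕ) (S T : Finset ℕ) : ℤ → List ℤ → Prop
  | p, [] => p ∈ Finset.Icc (1 : ℤ) n
  | p, d :: L => ToepArc n S T p (p + d) ∧ IsStepWalk n S T (p + d) L

section

variable {n : ℕ} {S T : Finset ℕ}

theorem IsStepWalk.sum_mem : ∀ {p : ℤ} {L : List ℤ}, IsStepWalk n S T p L →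
    p + L.sum ∈ Finset.Icc (1 : ℤ) n
  | _, [], h => by simpa [IsStepWalk] using h
  | _, _ :: _, h => by simpa [add_assoc] using h.2.sum_mem

theorem IsStepWalk.append : ∀ {p : ℤ} {L₁ L₂ : List ℤ}, IsStepWalk n S T p L₁ →
    IsStepWalk n S T (p + L₁.sum) L₂ → IsStepWalk n S T p (L₁ ++ L₂)
  | _, [], _, _, h₂ => by simpa using h₂
  | _, _ :: _, _, h₁, h₂ => ⟨h₁.1, h₁.2.append (by simpa [add_assoc] using h₂)⟩

theorem IsStepWalk.toepArc_take : ∀ {p : ℤ} {L : List ℤ}, IsStepWalk n S T p L →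
    ∀ k < L.length, ToepArc n S T (p + (L.take k).sum) (p + (L.take (k + 1)).sum)
  | _, [], _, _, hk => absurd hk (Nat.not_lt_zero _)
  | _, _ :: _, h, 0, _ => by simpa using h.1
  | _, _ :: _, h, k + 1, hk => by
    simpa [add_assoc] using h.2.toepArc_take k (Nat.lt_of_succ_lt_succ hk)

theorem arcCount_take_sum (x p : ℤ) : ∀ L : List ℤ,
    ArcCount (fun k => p + (L.take k).sum) L.length x = L.count x
  | [] => rfl
  | d :: L => by
    have ih := arcCount_take_sum x (p + d) L
    simp only [ArcCount, Finset.card_filter, add_sub_add_left_eq_sub] at ih ⊢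
    rw [List.length_cons, Finset.sum_range_succ', List.count_cons, ← ih]
    simp [List.take_succ_cons]

theorem ToepArc.reflect {u v : ℤ} (h : ToepArc n S T u v) :
    ToepArc n T S (n + 1 - u) (n + 1 - v) := by
  obtain ⟨hu, hv, ⟨s, hs, rfl⟩ | ⟨t, ht, rfl⟩⟩ := h <;>
    simp only [ToepArc, Finset.mem_Icc] at hu hv ⊢
  · exact ⟨by omega, by omega, .inr ⟨s, hs, by ring⟩⟩
  · exact ⟨by omega, by omega, .inl ⟨t, ht, by ring⟩⟩

theorem IsStepWalk.reflect : ∀ {p : ℤ} {L : List ℤ},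
    IsStepWalk n S T p L → IsStepWalk n T S (n + 1 - p) (L.map Neg.neg)
  | _, [], h => by simp only [IsStepWalk, List.map_nil, Finset.mem_Icc] at h ⊢; omega
  | p, d :: _, h => by
    have hshift : (n + 1 - p) + -d = n + 1 - (p + d) := by ring
    exact ⟨hshift ▸ h.1.reflect, hshift ▸ h.2.reflect⟩

theorem isStepWalk_replicate_neg {t : ℕ} (ht : t ∈ T) :
    ∀ (q : ℕ) {p : ℤ}, q * t < p → p ≤ n → IsStepWalk n S T p (List.replicate q (-(t : ℤ)))
  | 0, p, h₁, h₂ => by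
    simp only [List.replicate_zero, IsStepWalk, Finset.mem_Icc]
    push_cast at h₁
    omega
  | q + 1, p, h₁, h₂ => by
    push_cast at h₁
    have hqt : (0 : ℤ) ≤ q * t := by positivity
    refine ⟨⟨?_, ?_, .inr ⟨t, ht, by ring⟩⟩,
      isStepWalk_replicate_neg ht q (by linarith) (by linarith)⟩ <;>
      exact Finset.mem_Icc.2 ⟨by linarith, by linarith⟩

theorem exists_isStepWalk_replicate_neg_append {s t m : ℕ} (hs : s ∈ S) (ht : t ∈ T)
    (hst : s + t ≤ n) (hm : s ≤ m * t) {p : ℤ} (hp : p ∈ Finset.Icc (1 : ℤ) n) :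
    ∃ q ≤ m, IsStepWalk n S T p (List.replicate q (-(t : ℤ)) ++ [(s : ℤ)]) := by
  rw [Finset.mem_Icc] at hp
  have hst' : (s : ℤ) + t ≤ n := by exact_mod_cast hst
  have hm' : (s : ℤ) ≤ m * t := by exact_mod_cast hm
  have hex : ∃ q : ℕ, p + s ≤ n + q * t := ⟨m, by linarith⟩
  set q := Nat.find hex
  have hq : p + s ≤ n + q * t := Nat.find_spec hex
  -- by minimality `p + s > n + (q - 1) t`, so `q t < p + s + t - n ≤ p`
  have hqt : (q : ℤ) * t < p := by
    by_cases hq0 : q = 0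
    · rw [hq0, Nat.cast_zero, zero_mul]; omega
    · have hmin : ¬p + s ≤ n + ((q - 1 : ℕ) : ℤ) * t := Nat.find_min hex (Nat.sub_one_lt hq0)
      rw [not_le, Nat.cast_sub (Nat.one_le_iff_ne_zero.2 hq0), Nat.cast_one] at hmin
      linarith
  refine ⟨q, Nat.find_min' hex (by linarith), (isStepWalk_replicate_neg ht q hqt hp.2).append ?_⟩
  simp only [List.sum_replicate, nsmul_eq_mul, mul_neg, IsStepWalk, ToepArc, Finset.mem_Icc]
  exact ⟨⟨⟨by linarith, by linarith⟩, ⟨by linarith, by linarith⟩, .inl ⟨s, hs, rfl⟩⟩,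
    by linarith, by linarith⟩

theorem exists_isStepWalk_replicate_append_neg {s t m : ℕ} (hs : s ∈ S) (ht : t ∈ T)
    (hst : s + t ≤ n) (hm : t ≤ m * s) {p : ℤ} (hp : p ∈ Finset.Icc (1 : ℤ) n) :
    ∃ q ≤ m, IsStepWalk n S T p (List.replicate q (s : ℤ) ++ [-(t : ℤ)]) := by
  have hp' : (n + 1 - p : ℤ) ∈ Finset.Icc (1 : ℤ) n := by
    simp only [Finset.mem_Icc] at hp ⊢; omega
  obtain ⟨q, hq, hw⟩ := exists_isStepWalk_replicate_neg_append ht hs (by omega) hm hp'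
  exact ⟨q, hq, by simpa [List.map_replicate] using hw.reflect⟩

theorem List.count_replicate_append_of_ne {α : Type*} [BEq α] [LawfulBEq α] {x f : α} (q : ℕ)
    (L : List α) (hx : x ≠ f) : (List.replicate q f ++ L).count x = L.count x := by
  simp [List.count_replicate, Ne.symm hx]

theorem exists_isStepWalk_count_eq {s₀ t₀ m : ℕ}
    (hs₀ : s₀ ∈ S) (ht₀ : t₀ ∈ T) (R : Multiset ℤ)
    (hR : ∀ d ∈ R, (∃ s ∈ S, d = s ∧ s + t₀ ≤ n ∧ s ≤ m * t₀) ∨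
      (∃ t ∈ T, d = -t ∧ s₀ + t ≤ n ∧ t ≤ m * s₀))
    {p : ℤ} (hp : p ∈ Finset.Icc (1 : ℤ) n) :
    ∃ L : List ℤ, IsStepWalk n S T p L ∧
      (∀ x : ℤ, x ≠ s₀ → x ≠ -t₀ → L.count x = R.count x) ∧ L.length ≤ R.card * (m + 1) := by
  induction R using Multiset.induction_on generalizing p with
  | empty => exact ⟨[], hp, fun x _ _ => rfl, by simp⟩
  | cons d R ih =>
    obtain ⟨L₁, hL₁, hcount₁, hlen₁⟩ : ∃ L₁ : List ℤ, IsStepWalk n S T p L₁ ∧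
        (∀ x : ℤ, x ≠ s₀ → x ≠ -t₀ → L₁.count x = if x = d then 1 else 0) ∧
        L₁.length ≤ m + 1 := by
      rcases hR d (Multiset.mem_cons_self d R) with ⟨s, hs, rfl, hst, hm⟩ | ⟨t, ht, rfl, hst, hm⟩
      · obtain ⟨q, hq, hw⟩ := exists_isStepWalk_replicate_neg_append hs ht₀ hst hm hp
        refine ⟨_, hw, fun x _ hx => ?_, by simpa using hq⟩
        rw [List.count_replicate_append_of_ne q _ hx]
        simp [List.count_singleton, @eq_comm _ x]
      · obtain ⟨q, hq, hw⟩ := exists_isStepWalk_replicate_append_neg hs₀ ht hst hm hp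
        refine ⟨_, hw, fun x hx _ => ?_, by simpa using hq⟩
        rw [List.count_replicate_append_of_ne q _ hx]
        simp [List.count_singleton, @eq_comm _ x]
    obtain ⟨L₂, hL₂, hcount₂, hlen₂⟩ :=
      ih (fun d hd => hR d (Multiset.mem_cons_of_mem hd)) hL₁.sum_mem
    refine ⟨L₁ ++ L₂, hL₁.append hL₂, fun x hx₀ hx₁ => ?_, ?_⟩
    · rw [List.count_append, hcount₁ x hx₀ hx₁, hcount₂ x hx₀ hx₁, Multiset.count_cons, add_comm]
    · rw [List.length_append, Multiset.card_cons, add_one_mul]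
      omega

end

theorem Multiset.count_sum_replicate {ι α : Type*} [DecidableEq α] (I : Finset ι) (c : ι → ℕ)
    (f : ι → α) (x : α) :
    (∑ i ∈ I, Multiset.replicate (c i) (f i)).count x = ∑ i ∈ I with f i = x, c i := by
  simp [Multiset.count_sum', Multiset.count_replicate, Finset.sum_filter]

theorem le_ceilDiv_mul_of_le {a b c : ℕ} (h : a ≤ b) (hc : 0 < c) : a ≤ (b ⌈/⌉ c) * c :=
  h.trans (by simpa [mul_comm] using le_smul_ceilDiv (b := b) hc)

section PrescribedSteps

variable {k₁ k₂ : ℕ} (s : Fin (k₁ + 1) → ℕ) (t : Fin (k₂ + 1) → ℕ)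
  (a : Fin (k₁ + 1) → ℕ) (b : Fin (k₂ + 1) → ℕ)

def prescribedSteps : Multiset ℤ :=
  (∑ i ∈ Finset.univ.filter (fun i : Fin (k₁ + 1) => i ≠ 0), Multiset.replicate (a i) (s i : ℤ)) +
    ∑ j ∈ Finset.univ.filter (fun j : Fin (k₂ + 1) => j ≠ 0), Multiset.replicate (b j) (-(t j : ℤ))

theorem card_prescribedSteps :
    (prescribedSteps s t a b).card =
      (∑ i ∈ Finset.univ.filter (fun i : Fin (k₁ + 1) => i ≠ 0), a i) +
        ∑ j ∈ Finset.univ.filter (fun j : Fin (k₂ + 1) => j ≠ 0), b j := by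
  simp [prescribedSteps, Multiset.card_sum]

theorem mem_prescribedSteps {d : ℤ} (hd : d ∈ prescribedSteps s t a b) :
    (∃ i, d = s i) ∨ ∃ j, d = -(t j : ℤ) := by
  simp only [prescribedSteps, Multiset.mem_add, Multiset.mem_sum, Multiset.mem_replicate] at hd
  rcases hd with ⟨i, -, -, rfl⟩ | ⟨j, -, -, rfl⟩
  exacts [.inl ⟨i, rfl⟩, .inr ⟨j, rfl⟩]

variable {s t}

theorem count_prescribedSteps_natCast (hs : Function.Injective s) {i : Fin (k₁ + 1)}
    (hi : i ≠ 0) (hpos : 0 < s i) : (prescribedSteps s t a b).count (s i : ℤ) = a i := by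
  have hne j : -(t j : ℤ) ≠ s i := by omega
  rw [prescribedSteps, Multiset.count_add, Multiset.count_sum_replicate,
    Multiset.count_sum_replicate]
  simp [Finset.sum_filter, hs.eq_iff, hi, hne]

theorem count_prescribedSteps_neg (ht : Function.Injective t) {j : Fin (k₂ + 1)}
    (hj : j ≠ 0) (hpos : 0 < t j) : (prescribedSteps s t a b).count (-(t j : ℤ)) = b j := by
  have hne i : (s i : ℤ) ≠ -(t j) := by omega
  rw [prescribedSteps, Multiset.count_add, Multiset.count_sum_replicate,
    Multiset.count_sum_replicate]
  simp [Finset.sum_filter, ht.eq_iff, hj, hne]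

end PrescribedSteps

theorem walk_with_prescribed_arcs_general (n k₁ k₂ : ℕ)
    (s : Fin (k₁ + 1) → ℕ) (t : Fin (k₂ + 1) → ℕ)
    (hs : StrictMono s) (ht : StrictMono t)
    (hsmem : ∀ i, s i ∈ Finset.Icc 1 (n - 1)) (htmem : ∀ j, t j ∈ Finset.Icc 1 (n - 1))
    (hST1 : s (Fin.last k₁) + t 0 ≤ n) (hST2 : s 0 + t (Fin.last k₂) ≤ n)
    (v : ℤ) (hv : v ∈ Finset.Icc (1 : ℤ) (n : ℤ))
    (a : Fin (k₁ + 1) → ℕ) (b : Fin (k₂ + 1) → ℕ) :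
    ∃ ℓ : ℕ, ∃ w : ℕ → ℤ,
      w 0 = v ∧
      (∀ k < ℓ, ToepArc n (Finset.image s Finset.univ) (Finset.image t Finset.univ)
        (w k) (w (k + 1))) ∧
      (∀ i : Fin (k₁ + 1), i ≠ 0 → ArcCount w ℓ ((s i : ℤ)) = a i) ∧
      (∀ j : Fin (k₂ + 1), j ≠ 0 → ArcCount w ℓ (-(t j : ℤ)) = b j) ∧
      ℓ ≤ ((∑ i ∈ Finset.univ.filter (fun i : Fin (k₁ + 1) => i ≠ 0), a i) +
            (∑ j ∈ Finset.univ.filter (fun j : Fin (k₂ + 1) => j ≠ 0), b j)) *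
          (max (t (Fin.last k₂) ⌈/⌉ s 0) (s (Fin.last k₁) ⌈/⌉ t 0) + 1) := by
  set M := max (t (Fin.last k₂) ⌈/⌉ s 0) (s (Fin.last k₁) ⌈/⌉ t 0)
  have hs_pos i : 0 < s i := (Finset.mem_Icc.1 (hsmem i)).1
  have ht_pos j : 0 < t j := (Finset.mem_Icc.1 (htmem j)).1
  have hsM i : s i ≤ M * t 0 :=
    (le_ceilDiv_mul_of_le (hs.monotone (Fin.le_last i)) (ht_pos 0)).trans
      (Nat.mul_le_mul_right _ (le_max_right _ _))
  have htM j : t j ≤ M * s 0 :=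
    (le_ceilDiv_mul_of_le (ht.monotone (Fin.le_last j)) (hs_pos 0)).trans
      (Nat.mul_le_mul_right _ (le_max_left _ _))
  have hR : ∀ d ∈ prescribedSteps s t a b,
      (∃ s' ∈ Finset.image s Finset.univ, d = s' ∧ s' + t 0 ≤ n ∧ s' ≤ M * t 0) ∨
        ∃ t' ∈ Finset.image t Finset.univ, d = -t' ∧ s 0 + t' ≤ n ∧ t' ≤ M * s 0 := by
    intro d hd
    rcases mem_prescribedSteps s t a b hd with ⟨i, rfl⟩ | ⟨j, rfl⟩
    · exact .inl ⟨s i, Finset.mem_image_of_mem s (Finset.mem_univ i), rfl,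
        (Nat.add_le_add_right (hs.monotone (Fin.le_last i)) _).trans hST1, hsM i⟩
    · exact .inr ⟨t j, Finset.mem_image_of_mem t (Finset.mem_univ j), rfl,
        (Nat.add_le_add_left (ht.monotone (Fin.le_last j)) _).trans hST2, htM j⟩
  obtain ⟨L, hL, hcount, hlen⟩ := exists_isStepWalk_count_eq
    (Finset.mem_image_of_mem s (Finset.mem_univ 0)) (Finset.mem_image_of_mem t (Finset.mem_univ 0))
    _ hR hv
  refine ⟨L.length, fun k => v + (L.take k).sum, by simp, hL.toepArc_take, fun i hi => ?_,
    fun j hj => ?_, card_prescribedSteps s t a b ▸ hlen⟩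
  · rw [arcCount_take_sum, hcount _ (by simpa using hs.injective.ne hi)
      (by have := hs_pos i; omega), count_prescribedSteps_natCast a b hs.injective hi (hs_pos i)]
  · rw [arcCount_take_sum, hcount _ (by have := ht_pos j; omega)
      (by simpa using ht.injective.ne hj), count_prescribedSteps_neg a b ht.injective hj (ht_pos j)]

/-- For every vertex `v` and prescribed numbers `a_i` (`2 ≤ i ≤ k₁`)
and `b_j` (`2 ≤ j ≤ k₂`), there is a directed walk of some length `ℓ` starting at `v`
containing exactly `a_i` `s_i`-arcs and `b_j` `t_j`-arcs, with
`ℓ ≤ (Σ a_i + Σ b_j)·(max{⌈t_{k₂}/s_1⌉, ⌈s_{k₁}/t_1⌉} + 1)`. -/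
theorem walk_with_prescribed_arcs (n k₁ k₂ : ℕ) (hn : 2 ≤ n)
    (s : Fin (k₁ + 1) → ℕ) (t : Fin (k₂ + 1) → ℕ)
    (hs : StrictMono s) (ht : StrictMono t)
    (hsmem : ∀ i, s i ∈ Finset.Icc 1 (n - 1)) (htmem : ∀ j, t j ∈ Finset.Icc 1 (n - 1))
    (hST1 : s (Fin.last k₁) + t 0 ≤ n) (hST2 : s 0 + t (Fin.last k₂) ≤ n)
    (v : ℤ) (hv : v ∈ Finset.Icc (1 : ℤ) (n : ℤ))
    (a : Fin (k₁ + 1) → ℕ) (b : Fin (k₂ + 1) → ℕ) :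
    ∃ ℓ : ℕ, ∃ w : ℕ → ℤ,
      w 0 = v ∧
      (∀ k < ℓ, ToepArc n (Finset.image s Finset.univ) (Finset.image t Finset.univ)
        (w k) (w (k + 1))) ∧
      (∀ i : Fin (k₁ + 1), i ≠ 0 → ArcCount w ℓ ((s i : ℤ)) = a i) ∧
      (∀ j : Fin (k₂ + 1), j ≠ 0 → ArcCount w ℓ (-(t j : ℤ)) = b j) ∧
      ℓ ≤ ((∑ i ∈ Finset.univ.filter (fun i : Fin (k₁ + 1) => i ≠ 0), a i) +
            (∑ j ∈ Finset.univ.filter (fun j : Fin (k₂ + 1) => j ≠ 0), b j)) *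
          (max (t (Fin.last k₂) ⌈/⌉ s 0) (s (Fin.last k₁) ⌈/⌉ t 0) + 1) :=
  walk_with_prescribed_arcs_general n k₁ k₂ s t hs ht hsmem htmem hST1 hST2 v hv a b
end

section
/- Let D be the Toeplitz digraph of T_n⟨S;T⟩ with S = {s_1 < ⋯ < s_{k_1}}, T = {t_1 < ⋯ < t_{k_2}}, max S + min T ≤ n and min S + max T ≤ n. Let v be a vertex of D and let a_1, …, a_{k_1}, b_1, …, b_{k_2} be nonnegative integers such that there exists a directed walk in D starting at v containing exactly a_i s_i-arcs for each 1 ≤ i ≤ k_1 and exactly b_j t_j-arcs for each 1 ≤ j ≤ k_2. If a ≥ a_1 and b ≥ b_1 are nonnegative integers satisfying 1 ≤ v + a·s_1 + Σ_{i=2}^{k_1} a_i s_i − b·t_1 − Σ_{j=2}^{k_2} b_j t_j ≤ n, then there exists a directed walk in D starting at v containing exactly a s_1-arcs, b t_1-arcs, a_i s_i-arcs for each 2 ≤ i ≤ k_1, and b_j t_j-arcs for each 2 ≤ j ≤ k_2. -/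
/- The endpoint of a walk telescopes to `v + Σ aᵢ sᵢ − Σ bⱼ tⱼ`, so appending `A − a₁` arcs
of length `s₁ = s 0` and `B − b₁` arcs of length `t₁ = t 0` to the given walk lands on the
prescribed target.
They can be appended greedily: step up by `s₁` while up-steps remain and fit in `[1, n]`,
otherwise step down by `t₁`. Since `s₁ + t₁ ≤ n`, a down-step fits whenever an up-step does not,
and since the target lies in `[1, n]`, a step of the kind that fits is always still available. -/

open Finset

def IsToepWalk (n : ℕ) (S T : Finset ℕ) (w : ℕ → ℤ) (ℓ : ℕ) : Prop :=
  ∀ k < ℓ, ToepArc n S T (w k) (w (k + 1))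

def walkSnoc (w : ℕ → ℤ) (ℓ : ℕ) (y : ℤ) : ℕ → ℤ :=
  fun k => if k ≤ ℓ then w k else y

section ArcCount

variable {w w' : ℕ → ℤ} {ℓ : ℕ}

lemma arcCount_congr (h : ∀ k < ℓ, w (k + 1) - w k = w' (k + 1) - w' k) (x : ℤ) :
    ArcCount w ℓ x = ArcCount w' ℓ x := by
  unfold ArcCount
  congr 1
  exact filter_congr fun k hk => by rw [h k (mem_range.mp hk)]

lemma arcCount_succ (w : ℕ → ℤ) (ℓ : ℕ) (x : ℤ) :
    ArcCount w (ℓ + 1) x = ArcCount w ℓ x + if w (ℓ + 1) - w ℓ = x then 1 else 0 := by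
  unfold ArcCount
  rw [range_add_one, filter_insert]
  split_ifs
  · exact card_insert_of_notMem (by simp)
  · rfl

lemma walkSnoc_of_le (y : ℤ) {k : ℕ} (hk : k ≤ ℓ) : walkSnoc w ℓ y k = w k := if_pos hk

lemma walkSnoc_succ (y : ℤ) : walkSnoc w ℓ y (ℓ + 1) = y := if_neg (by omega)

lemma arcCount_walkSnoc (y x : ℤ) :
    ArcCount (walkSnoc w ℓ y) (ℓ + 1) x = ArcCount w ℓ x + if y - w ℓ = x then 1 else 0 := by
  rw [arcCount_succ, walkSnoc_succ, walkSnoc_of_le y le_rfl,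
    arcCount_congr fun k hk => by rw [walkSnoc_of_le y hk.le, walkSnoc_of_le y hk]]

lemma sub_eq_sum_arcCount_mul {V : Finset ℤ} (hV : ∀ k < ℓ, w (k + 1) - w k ∈ V) :
    w ℓ - w 0 = ∑ x ∈ V, (ArcCount w ℓ x : ℤ) * x := by
  rw [← sum_range_sub, ← sum_fiberwise_of_maps_to fun k hk => hV k (mem_range.mp hk)]
  refine sum_congr rfl fun x _ => ?_
  rw [sum_congr rfl fun k hk => (mem_filter.mp hk).2, sum_const, nsmul_eq_mul]
  rfl

end ArcCount

namespace IsToepWalk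

variable {n : ℕ} {S T : Finset ℕ} {w : ℕ → ℤ} {ℓ : ℕ}

lemma last_mem_Icc (hw : IsToepWalk n S T w ℓ) (h0 : w 0 ∈ Icc (1 : ℤ) n) :
    w ℓ ∈ Icc (1 : ℤ) n := by
  cases ℓ with
  | zero => exact h0
  | succ ℓ => exact (hw ℓ ℓ.lt_succ_self).2.1

lemma snoc (hw : IsToepWalk n S T w ℓ) {y : ℤ} (hy : ToepArc n S T (w ℓ) y) :
    IsToepWalk n S T (walkSnoc w ℓ y) (ℓ + 1) := by
  intro k hk
  rcases Nat.lt_succ_iff_lt_or_eq.mp hk with hk | rfl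
  · rw [walkSnoc_of_le y hk.le, walkSnoc_of_le y hk]
    exact hw k hk
  · rwa [walkSnoc_of_le y le_rfl, walkSnoc_succ]

lemma sub_eq_sum (hS : 0 ∉ S) (hw : IsToepWalk n S T w ℓ) :
    w ℓ - w 0 = ∑ x ∈ S, (ArcCount w ℓ x : ℤ) * x - ∑ y ∈ T, (ArcCount w ℓ (-y) : ℤ) * y := by
  have hdisj : Disjoint (S.image ((↑) : ℕ → ℤ)) (T.image fun y : ℕ => -(y : ℤ)) := by
    refine disjoint_left.mpr fun z hzS hzT => ?_
    obtain ⟨x, hx, rfl⟩ := mem_image.mp hzS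
    obtain ⟨y, -, hxy⟩ := mem_image.mp hzT
    obtain rfl : x = 0 := by omega
    exact hS hx
  have hsteps : ∀ k < ℓ, w (k + 1) - w k ∈ S.image (↑) ∪ T.image fun y : ℕ => -(y : ℤ) := by
    intro k hk
    obtain ⟨-, -, ⟨x, hx, hstep⟩ | ⟨y, hy, hstep⟩⟩ := hw k hk
    · exact mem_union_left _ (mem_image.mpr ⟨x, hx, by omega⟩)
    · exact mem_union_right _ (mem_image.mpr ⟨y, hy, by omega⟩)
  rw [sub_eq_sum_arcCount_mul hsteps, sum_union hdisj,
    sum_image fun _ _ _ _ h => Nat.cast_injective h,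
    sum_image fun _ _ _ _ h => Nat.cast_injective (neg_injective h)]
  simp only [mul_neg, sum_neg_distrib, sub_eq_add_neg]

end IsToepWalk

lemma step_up_or_step_down {n s t p q : ℕ} {x : ℤ} (hst : s + t ≤ n) (hpq : 0 < p + q)
    (hy : x + p * s - q * t ∈ Icc (1 : ℤ) n) :
    (0 < p ∧ x + s ≤ n) ∨ (0 < q ∧ 1 ≤ x - t) := by
  rw [mem_Icc] at hy
  by_contra! h
  rcases Nat.eq_zero_or_pos p with rfl | hp
  · have hq : (1 : ℤ) ≤ q := Nat.one_le_cast.mpr (by omega)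
    have := h.2 (by omega)
    have : (t : ℤ) ≤ q * t := le_mul_of_one_le_left (by positivity) hq
    push_cast at hy
    linarith
  · have hup := h.1 hp
    rcases Nat.eq_zero_or_pos q with rfl | hq
    · have : (s : ℤ) ≤ p * s := le_mul_of_one_le_left (by positivity) (by exact_mod_cast hp)
      push_cast at hy
      linarith
    · have := h.2 hq
      omega

section Extension

variable {n : ℕ} {S T : Finset ℕ} {s₀ t₀ : ℕ}

lemma exists_arc_toward (hs₀ : s₀ ∈ S) (ht₀ : t₀ ∈ T) (hst : s₀ + t₀ ≤ n) {x : ℤ}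
    (hx : x ∈ Icc (1 : ℤ) n) {p q : ℕ} (hpq : 0 < p + q)
    (hy : x + p * s₀ - q * t₀ ∈ Icc (1 : ℤ) n) :
    ∃ y : ℤ, ∃ p' q' : ℕ, p' + q' + 1 = p + q ∧ ToepArc n S T x y ∧
      y + p' * s₀ - q' * t₀ = x + p * s₀ - q * t₀ ∧
      ∀ z, (if y - x = z then 1 else 0) + (if (s₀ : ℤ) = z then p' else 0) +
          (if -(t₀ : ℤ) = z then q' else 0) =
        (if (s₀ : ℤ) = z then p else 0) + (if -(t₀ : ℤ) = z then q else 0) := by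
  obtain ⟨hx1, hxn⟩ := mem_Icc.mp hx
  rcases step_up_or_step_down hst hpq hy with ⟨hp, hup⟩ | ⟨hq, hdown⟩
  · refine ⟨x + s₀, p - 1, q, by omega, ⟨hx, mem_Icc.mpr ⟨by omega, hup⟩, .inl ⟨s₀, hs₀, rfl⟩⟩,
      by push_cast [hp]; ring, fun z => ?_⟩
    simp only [add_sub_cancel_left]
    split_ifs <;> omega
  · refine ⟨x - t₀, p, q - 1, by omega, ⟨hx, mem_Icc.mpr ⟨hdown, by omega⟩, .inr ⟨t₀, ht₀, rfl⟩⟩,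
      by push_cast [hq]; ring, fun z => ?_⟩
    simp only [sub_sub_cancel_left]
    split_ifs <;> omega

theorem IsToepWalk.exists_extend (hs₀ : s₀ ∈ S) (ht₀ : t₀ ∈ T) (hst : s₀ + t₀ ≤ n) (p q : ℕ)
    {w : ℕ → ℤ} {ℓ : ℕ} (hw : IsToepWalk n S T w ℓ) (hℓ : w ℓ ∈ Icc (1 : ℤ) n)
    (hy : w ℓ + p * s₀ - q * t₀ ∈ Icc (1 : ℤ) n) :
    ∃ w' : ℕ → ℤ, w' 0 = w 0 ∧ IsToepWalk n S T w' (ℓ + (p + q)) ∧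
      ∀ x, ArcCount w' (ℓ + (p + q)) x =
        ArcCount w ℓ x + (if (s₀ : ℤ) = x then p else 0) + (if -(t₀ : ℤ) = x then q else 0) := by
  induction hm : p + q generalizing p q w ℓ with
  | zero =>
    obtain ⟨rfl, rfl⟩ : p = 0 ∧ q = 0 := by omega
    exact ⟨w, rfl, hw, fun x => by simp⟩
  | succ m ih =>
    obtain ⟨y, p', q', hpq', harc, hy', hcount⟩ := exists_arc_toward hs₀ ht₀ hst hℓ (by omega) hy
    obtain ⟨w', hw'0, hw', hcount'⟩ := ih p' q' (hw.snoc harc)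
      (by rw [walkSnoc_succ]; exact harc.2.1) (by rwa [walkSnoc_succ, hy']) (by omega)
    rw [show ℓ + (m + 1) = ℓ + 1 + m by omega]
    refine ⟨w', by rw [hw'0, walkSnoc_of_le y (Nat.zero_le _)], hw', fun x => ?_⟩
    rw [hcount', arcCount_walkSnoc]
    linarith [hcount x]

end Extension

theorem walk_extension_general (n k₁ k₂ : ℕ)
    (s : Fin (k₁ + 1) → ℕ) (t : Fin (k₂ + 1) → ℕ)
    (hs : StrictMono s) (ht : StrictMono t)
    (hsmem : ∀ i, s i ∈ Finset.Icc 1 (n - 1))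
    (hST2 : s 0 + t (Fin.last k₂) ≤ n)
    (v : ℤ) (hv : v ∈ Finset.Icc (1 : ℤ) (n : ℤ))
    (a : Fin (k₁ + 1) → ℕ) (b : Fin (k₂ + 1) → ℕ)
    (hW : ∃ ℓ : ℕ, ∃ w : ℕ → ℤ,
      w 0 = v ∧
      (∀ k < ℓ, ToepArc n (Finset.image s Finset.univ) (Finset.image t Finset.univ)
        (w k) (w (k + 1))) ∧
      (∀ i : Fin (k₁ + 1), ArcCount w ℓ ((s i : ℤ)) = a i) ∧
      (∀ j : Fin (k₂ + 1), ArcCount w ℓ (-(t j : ℤ)) = b j))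
    (A B : ℕ) (hA : a 0 ≤ A) (hB : b 0 ≤ B)
    (hrange1 : 1 ≤ v + (A : ℤ) * (s 0 : ℤ)
        + ∑ i ∈ Finset.univ.filter (fun i : Fin (k₁ + 1) => i ≠ 0), (a i : ℤ) * (s i : ℤ)
        - (B : ℤ) * (t 0 : ℤ)
        - ∑ j ∈ Finset.univ.filter (fun j : Fin (k₂ + 1) => j ≠ 0), (b j : ℤ) * (t j : ℤ))
    (hrange2 : v + (A : ℤ) * (s 0 : ℤ)
        + ∑ i ∈ Finset.univ.filter (fun i : Fin (k₁ + 1) => i ≠ 0), (a i : ℤ) * (s i : ℤ)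
        - (B : ℤ) * (t 0 : ℤ)
        - ∑ j ∈ Finset.univ.filter (fun j : Fin (k₂ + 1) => j ≠ 0), (b j : ℤ) * (t j : ℤ)
        ≤ (n : ℤ)) :
    ∃ ℓ : ℕ, ∃ w : ℕ → ℤ,
      w 0 = v ∧
      (∀ k < ℓ, ToepArc n (Finset.image s Finset.univ) (Finset.image t Finset.univ)
        (w k) (w (k + 1))) ∧
      ArcCount w ℓ ((s 0 : ℤ)) = A ∧
      ArcCount w ℓ (-(t 0 : ℤ)) = B ∧
      (∀ i : Fin (k₁ + 1), i ≠ 0 → ArcCount w ℓ ((s i : ℤ)) = a i) ∧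
      (∀ j : Fin (k₂ + 1), j ≠ 0 → ArcCount w ℓ (-(t j : ℤ)) = b j) := by
  obtain ⟨ℓ, w, rfl, hw, ha, hb⟩ := hW
  replace hw : IsToepWalk n (univ.image s) (univ.image t) w ℓ := hw
  have hs_pos (i) : 0 < s i := (mem_Icc.mp (hsmem i)).1
  have hst : s 0 + t 0 ≤ n := (Nat.add_le_add_left (ht.monotone (Fin.zero_le _)) _).trans hST2
  have hend : w ℓ - w 0 = ∑ i, (a i : ℤ) * s i - ∑ j, (b j : ℤ) * t j := by
    rw [hw.sub_eq_sum (by simpa using fun i => (hs_pos i).ne'), sum_image hs.injective.injOn,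
      sum_image ht.injective.injOn]
    simp only [ha, hb]
  have htarget : w ℓ + ((A - a 0 : ℕ) : ℤ) * s 0 - ((B - b 0 : ℕ) : ℤ) * t 0 =
      w 0 + A * s 0 + ∑ i ∈ univ.filter (· ≠ 0), (a i : ℤ) * s i
        - B * t 0 - ∑ j ∈ univ.filter (· ≠ 0), (b j : ℤ) * t j := by
    rw [← add_sum_erase _ _ (mem_univ 0), ← add_sum_erase _ _ (mem_univ 0)] at hend
    rw [filter_ne', filter_ne']
    push_cast [hA, hB]
    linarith
  obtain ⟨w', hw'0, hw', hcount⟩ := hw.exists_extend (mem_image_of_mem s (mem_univ 0))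
    (mem_image_of_mem t (mem_univ 0)) hst (A - a 0) (B - b 0) (hw.last_mem_Icc hv)
    (by rw [htarget]; exact mem_Icc.mpr ⟨hrange1, hrange2⟩)
  have hs_ne_neg_t (i j) : (s i : ℤ) ≠ -(t j : ℤ) := by have := hs_pos i; omega
  refine ⟨_, w', hw'0, hw', ?_, ?_, fun i hi => ?_, fun j hj => ?_⟩ <;> rw [hcount]
  · rw [ha, if_pos rfl, if_neg (hs_ne_neg_t 0 0).symm]
    omega
  · rw [hb, if_neg (hs_ne_neg_t 0 0), if_pos rfl]
    omega
  · rw [ha, if_neg (by exact_mod_cast hs.injective.ne (Ne.symm hi)), if_neg (hs_ne_neg_t i 0).symm]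
    rfl
  · rw [hb, if_neg (hs_ne_neg_t 0 j), if_neg (by simpa using ht.injective.ne (Ne.symm hj))]
    rfl

/-- Suppose there is a directed walk starting at `v` with exactly
`a_i` `s_i`-arcs and `b_j` `t_j`-arcs (`1 ≤ i ≤ k₁`, `1 ≤ j ≤ k₂`).  If `a ≥ a_1` and
`b ≥ b_1` satisfy `1 ≤ v + a·s_1 + Σ_{i≥2} a_i s_i − b·t_1 − Σ_{j≥2} b_j t_j ≤ n`,
then there is a directed walk starting at `v` with exactly `a` `s_1`-arcs, `b`
`t_1`-arcs, and `a_i` `s_i`-arcs, `b_j` `t_j`-arcs for `i, j ≥ 2`. -/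
theorem walk_extension (n k₁ k₂ : ℕ) (hn : 2 ≤ n)
    (s : Fin (k₁ + 1) → ℕ) (t : Fin (k₂ + 1) → ℕ)
    (hs : StrictMono s) (ht : StrictMono t)
    (hsmem : ∀ i, s i ∈ Finset.Icc 1 (n - 1)) (htmem : ∀ j, t j ∈ Finset.Icc 1 (n - 1))
    (hST1 : s (Fin.last k₁) + t 0 ≤ n) (hST2 : s 0 + t (Fin.last k₂) ≤ n)
    (v : ℤ) (hv : v ∈ Finset.Icc (1 : ℤ) (n : ℤ))
    (a : Fin (k₁ + 1) → ℕ) (b : Fin (k₂ + 1) → ℕ)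
    (hW : ∃ ℓ : ℕ, ∃ w : ℕ → ℤ,
      w 0 = v ∧
      (∀ k < ℓ, ToepArc n (Finset.image s Finset.univ) (Finset.image t Finset.univ)
        (w k) (w (k + 1))) ∧
      (∀ i : Fin (k₁ + 1), ArcCount w ℓ ((s i : ℤ)) = a i) ∧
      (∀ j : Fin (k₂ + 1), ArcCount w ℓ (-(t j : ℤ)) = b j))
    (A B : ℕ) (hA : a 0 ≤ A) (hB : b 0 ≤ B)
    (hrange1 : 1 ≤ v + (A : ℤ) * (s 0 : ℤ)
        + ∑ i ∈ Finset.univ.filter (fun i : Fin (k₁ + 1) => i ≠ 0), (a i : ℤ) * (s i : ℤ)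
        - (B : ℤ) * (t 0 : ℤ)
        - ∑ j ∈ Finset.univ.filter (fun j : Fin (k₂ + 1) => j ≠ 0), (b j : ℤ) * (t j : ℤ))
    (hrange2 : v + (A : ℤ) * (s 0 : ℤ)
        + ∑ i ∈ Finset.univ.filter (fun i : Fin (k₁ + 1) => i ≠ 0), (a i : ℤ) * (s i : ℤ)
        - (B : ℤ) * (t 0 : ℤ)
        - ∑ j ∈ Finset.univ.filter (fun j : Fin (k₂ + 1) => j ≠ 0), (b j : ℤ) * (t j : ℤ)
        ≤ (n : ℤ)) :
    ∃ ℓ : ℕ, ∃ w : ℕ → ℤ,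
      w 0 = v ∧
      (∀ k < ℓ, ToepArc n (Finset.image s Finset.univ) (Finset.image t Finset.univ)
        (w k) (w (k + 1))) ∧
      ArcCount w ℓ ((s 0 : ℤ)) = A ∧
      ArcCount w ℓ (-(t 0 : ℤ)) = B ∧
      (∀ i : Fin (k₁ + 1), i ≠ 0 → ArcCount w ℓ ((s i : ℤ)) = a i) ∧
      (∀ j : Fin (k₂ + 1), j ≠ 0 → ArcCount w ℓ (-(t j : ℤ)) = b j) :=
  walk_extension_general n k₁ k₂ s t hs ht hsmem hST2 v hv a b hW A B hA hB hrange1 hrange2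
end
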